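/- arXiv:1801.04836 — 11 statements merged into one kernel-verified Lean document; each statement's English description precedes it below -/
import Mathlib

section
/- Let a, b, c be positive integers with gcd(a,b,c) = 1 such that a + b + c is odd and a ≡ b ≡ c (mod 4). Then for every positive integer n, t(a,b,c;n) equals the number of integer triples (x,y,z) ∈ ℤ³ satisfying a·x² + b·y² + c·z² = 8n + a + b + c. -/
/-- `ternaryTriangular a b c n` : the number of integer triples `(x,y,z)` with
`a·x(x−1)/2 + b·y(y−1)/2 + c·z(z−1)/2 = n` (written without division). -/
noncomputable def ternaryTriangular (a b c n : ℤ) : ℕ :=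
  {p : ℤ × ℤ × ℤ | a * (p.1 * (p.1 - 1)) + b * (p.2.1 * (p.2.1 - 1))
    + c * (p.2.2 * (p.2.2 - 1)) = 2 * n}.ncard

lemma sq_emod_four (u : ℤ) : u ^ 2 % 4 = u % 2 := by
  obtain ⟨k, rfl⟩ | ⟨k, rfl⟩ := Int.even_or_odd u
  · have h : (k + k) ^ 2 = 4 * k ^ 2 := by ring
    rw [h]
    generalize k ^ 2 = m
    omega
  · have h : (2 * k + 1) ^ 2 = 4 * (k ^ 2 + k) + 1 := by ring
    rw [h]
    generalize k ^ 2 + k = m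
    omega

lemma zmod4_key : ∀ A s t r : ZMod 4, (A = 1 ∨ A = 3) → (s = 0 ∨ s = 1) →
    (t = 0 ∨ t = 1) → (r = 0 ∨ r = 1) →
    A * s + A * t + A * r = A + A + A → s = 1 ∧ t = 1 ∧ r = 1 := by decide

lemma zmod4_sq (x : ZMod 4) : x ^ 2 = 0 ∨ x ^ 2 = 1 := by revert x; decide

lemma int_cast_zmod4 (a : ℤ) (h : a % 4 = 1 ∨ a % 4 = 3) :
    (a : ZMod 4) = 1 ∨ (a : ZMod 4) = 3 := by
  have hmod : ((a % 4 : ℤ) : ZMod 4) = (a : ZMod 4) := by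
    rw [ZMod.intCast_eq_intCast_iff]
    exact Int.emod_emod_of_dvd a (by norm_num)
  rcases h with h | h <;> rw [h] at hmod <;> [left; right] <;> simpa using hmod.symm

lemma all_odd (a b c u v w n : ℤ) (ha2 : a % 2 = 1) (hab : a % 4 = b % 4)
    (hbc : b % 4 = c % 4)
    (h : a * u ^ 2 + b * v ^ 2 + c * w ^ 2 = 8 * n + a + b + c) :
    u % 2 = 1 ∧ v % 2 = 1 ∧ w % 2 = 1 := by
  have hzm := congrArg (Int.cast : ℤ → ZMod 4) h
  push_cast at hzm
  have h8 : (8 : ZMod 4) = 0 := by decide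
  rw [h8, zero_mul, zero_add] at hzm
  have hA : (a : ZMod 4) = (b : ZMod 4) := by
    rw [ZMod.intCast_eq_intCast_iff]; exact hab
  have hB : (b : ZMod 4) = (c : ZMod 4) := by
    rw [ZMod.intCast_eq_intCast_iff]; exact hbc
  rw [← hA, ← hB, ← hA] at hzm
  have hAval : (a : ZMod 4) = 1 ∨ (a : ZMod 4) = 3 :=
    int_cast_zmod4 a (by omega)
  have hkey := zmod4_key (a : ZMod 4) ((u : ZMod 4) ^ 2) ((v : ZMod 4) ^ 2)
    ((w : ZMod 4) ^ 2) hAval (zmod4_sq _) (zmod4_sq _) (zmod4_sq _) hzm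
  refine ⟨?_, ?_, ?_⟩
  · have := hkey.1
    have h1 : ((u ^ 2 : ℤ) : ZMod 4) = ((1 : ℤ) : ZMod 4) := by push_cast; simpa using this
    have := (ZMod.intCast_eq_intCast_iff _ _ _).mp h1
    have h2 : u ^ 2 % 4 = 1 := by simpa [Int.ModEq] using this
    have := sq_emod_four u
    omega
  · have := hkey.2.1
    have h1 : ((v ^ 2 : ℤ) : ZMod 4) = ((1 : ℤ) : ZMod 4) := by push_cast; simpa using this
    have := (ZMod.intCast_eq_intCast_iff _ _ _).mp h1
    have h2 : v ^ 2 % 4 = 1 := by simpa [Int.ModEq] using this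
    have := sq_emod_four v
    omega
  · have := hkey.2.2
    have h1 : ((w ^ 2 : ℤ) : ZMod 4) = ((1 : ℤ) : ZMod 4) := by push_cast; simpa using this
    have := (ZMod.intCast_eq_intCast_iff _ _ _).mp h1
    have h2 : w ^ 2 % 4 = 1 := by simpa [Int.ModEq] using this
    have := sq_emod_four w
    omega

theorem stmt_1 (a b c : ℤ) (ha : 0 < a) (hb : 0 < b) (hc : 0 < c)
    (hgcd : Int.gcd (Int.gcd a b) c = 1) (hodd : Odd (a + b + c))
    (hab : a ≡ b [ZMOD 4]) (hbc : b ≡ c [ZMOD 4])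
    (n : ℤ) (hn : 0 < n) :
    ternaryTriangular a b c n =
      {p : ℤ × ℤ × ℤ | a * p.1 ^ 2 + b * p.2.1 ^ 2 + c * p.2.2 ^ 2
        = 8 * n + a + b + c}.ncard := by
  have hab' : a % 4 = b % 4 := hab
  have hbc' : b % 4 = c % 4 := hbc
  have ha2 : a % 2 = 1 := by
    obtain ⟨k, hk⟩ := hodd
    omega
  have hinj : Function.Injective
      (fun p : ℤ × ℤ × ℤ => ((2 * p.1 - 1, 2 * p.2.1 - 1, 2 * p.2.2 - 1) : ℤ × ℤ × ℤ)) := by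
    rintro ⟨x, y, z⟩ ⟨x', y', z'⟩ h
    simp only [Prod.mk.injEq] at h ⊢
    omega
  have hset : {p : ℤ × ℤ × ℤ | a * p.1 ^ 2 + b * p.2.1 ^ 2 + c * p.2.2 ^ 2
        = 8 * n + a + b + c}
      = (fun p : ℤ × ℤ × ℤ => ((2 * p.1 - 1, 2 * p.2.1 - 1, 2 * p.2.2 - 1) : ℤ × ℤ × ℤ)) ''
        {p : ℤ × ℤ × ℤ | a * (p.1 * (p.1 - 1)) + b * (p.2.1 * (p.2.1 - 1))
          + c * (p.2.2 * (p.2.2 - 1)) = 2 * n} := by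
    ext ⟨u, v, w⟩
    simp only [Set.mem_setOf_eq, Set.mem_image, Prod.exists, Prod.mk.injEq]
    constructor
    · intro h
      obtain ⟨hu, hv, hw⟩ := all_odd a b c u v w n ha2 hab' hbc' h
      obtain ⟨x, rfl⟩ : ∃ x, u = 2 * x - 1 := ⟨(u + 1) / 2, by omega⟩
      obtain ⟨y, rfl⟩ : ∃ y, v = 2 * y - 1 := ⟨(v + 1) / 2, by omega⟩
      obtain ⟨z, rfl⟩ : ∃ z, w = 2 * z - 1 := ⟨(w + 1) / 2, by omega⟩
      refine ⟨x, y, z, ?_, rfl, rfl, rfl⟩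
      have h4 : (4 : ℤ) * (a * (x * (x - 1)) + b * (y * (y - 1)) + c * (z * (z - 1)))
          = 4 * (2 * n) := by linear_combination h
      exact mul_left_cancel₀ (by norm_num) h4
    · rintro ⟨x, y, z, htri, h1, h2, h3⟩
      subst h1; subst h2; subst h3
      linear_combination 4 * htri
  rw [ternaryTriangular, hset, Set.ncard_image_of_injective _ hinj]
end

section
/- Let a, b, c be positive integers with gcd(a,b,c) = 1, where a and b are odd and c is even, and set S = a + b + c. If S ≡ 2 (mod 4) and c ≡ 4 (mod 8), then for every positive integer n, t(a,b,c;n) equals the number of integer triples (x,y,z) ∈ ℤ³ satisfying a·x² + b·y² + c·z² = 8n + S. -/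
private lemma zmodHelper : ∀ A B X Y Z : ZMod 8,
    ZMod.castHom (by norm_num : (2:ℕ) ∣ 8) (ZMod 2) A = 1 →
    ZMod.castHom (by norm_num : (2:ℕ) ∣ 8) (ZMod 2) B = 1 →
    ZMod.castHom (by norm_num : (4:ℕ) ∣ 8) (ZMod 4) (A + B + 4) = 2 →
    A * X ^ 2 + B * Y ^ 2 + 4 * Z ^ 2 = A + B + 4 →
    ZMod.castHom (by norm_num : (2:ℕ) ∣ 8) (ZMod 2) X = 1 ∧
    ZMod.castHom (by norm_num : (2:ℕ) ∣ 8) (ZMod 2) Y = 1 ∧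
    ZMod.castHom (by norm_num : (2:ℕ) ∣ 8) (ZMod 2) Z = 1 := by decide

private lemma intOdd_iff_cast (x : ℤ) : ((x : ZMod 2) = 1) ↔ Odd x := by
  rw [show (1 : ZMod 2) = ((1 : ℤ) : ZMod 2) by norm_num,
    ZMod.intCast_eq_intCast_iff, Int.odd_iff, Int.ModEq]
  omega

theorem stmt_2 (a b c : ℤ) (ha : 0 < a) (hb : 0 < b) (hc : 0 < c)
    (hgcd : Int.gcd (Int.gcd a b) c = 1)
    (hao : Odd a) (hbo : Odd b) (hce : Even c)
    (hS : a + b + c ≡ 2 [ZMOD 4]) (hc4 : c ≡ 4 [ZMOD 8])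
    (n : ℤ) (hn : 0 < n) :
    ternaryTriangular a b c n =
      {p : ℤ × ℤ × ℤ | a * p.1 ^ 2 + b * p.2.1 ^ 2 + c * p.2.2 ^ 2
        = 8 * n + (a + b + c)}.ncard := by
  have hc8 : (c : ZMod 8) = 4 := by
    rw [show (4 : ZMod 8) = ((4 : ℤ) : ZMod 8) by norm_num]
    exact (ZMod.intCast_eq_intCast_iff _ _ _).mpr hc4
  have hS4 : ((a + b + c : ℤ) : ZMod 4) = 2 := by
    rw [show (2 : ZMod 4) = ((2 : ℤ) : ZMod 4) by norm_num]
    exact (ZMod.intCast_eq_intCast_iff _ _ _).mpr hS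
  have hinj : Function.Injective
      (fun p : ℤ × ℤ × ℤ => (2*p.1 - 1, 2*p.2.1 - 1, 2*p.2.2 - 1)) := by
    intro ⟨x, y, z⟩ ⟨u, v, w⟩ h
    simp only [Prod.mk.injEq] at h
    obtain ⟨h1, h2, h3⟩ := h
    refine Prod.ext ?_ (Prod.ext ?_ ?_) <;> simp <;> omega
  have key : (fun p : ℤ × ℤ × ℤ => (2*p.1 - 1, 2*p.2.1 - 1, 2*p.2.2 - 1)) ''
      {p : ℤ × ℤ × ℤ | a * (p.1 * (p.1 - 1)) + b * (p.2.1 * (p.2.1 - 1))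
        + c * (p.2.2 * (p.2.2 - 1)) = 2 * n}
      = {p : ℤ × ℤ × ℤ | a * p.1 ^ 2 + b * p.2.1 ^ 2 + c * p.2.2 ^ 2
        = 8 * n + (a + b + c)} := by
    ext ⟨x, y, z⟩
    simp only [Set.mem_image, Set.mem_setOf_eq, Prod.mk.injEq, Prod.exists]
    constructor
    · rintro ⟨u, v, w, h, hx, hy, hz⟩
      subst hx hy hz
      linear_combination 4 * h
    · intro h
      -- reduce mod 8
      have h8 : (a : ZMod 8) * (x : ZMod 8) ^ 2 + (b : ZMod 8) * (y : ZMod 8) ^ 2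
          + 4 * (z : ZMod 8) ^ 2 = (a : ZMod 8) + (b : ZMod 8) + 4 := by
        have := congrArg (fun t : ℤ => (t : ZMod 8)) h
        push_cast at this
        rw [show ((8 : ZMod 8)) = 0 by decide] at this
        rw [← hc8]
        linear_combination this
      have hScast : ZMod.castHom (by norm_num : (4:ℕ) ∣ 8) (ZMod 4)
          ((a : ZMod 8) + (b : ZMod 8) + 4) = 2 := by
        rw [← hc8, show ((a : ZMod 8) + (b : ZMod 8) + (c : ZMod 8)) =
          (((a + b + c : ℤ)) : ZMod 8) by push_cast; ring, map_intCast, hS4]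
      have haC : ZMod.castHom (by norm_num : (2:ℕ) ∣ 8) (ZMod 2) (a : ZMod 8) = 1 := by
        rw [map_intCast]; exact (intOdd_iff_cast a).mpr hao
      have hbC : ZMod.castHom (by norm_num : (2:ℕ) ∣ 8) (ZMod 2) (b : ZMod 8) = 1 := by
        rw [map_intCast]; exact (intOdd_iff_cast b).mpr hbo
      obtain ⟨hX, hY, hZ⟩ := zmodHelper (a : ZMod 8) (b : ZMod 8)
        (x : ZMod 8) (y : ZMod 8) (z : ZMod 8) haC hbC hScast h8
      rw [map_intCast] at hX hY hZ
      obtain ⟨u, hu⟩ := (intOdd_iff_cast x).mp hX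
      obtain ⟨v, hv⟩ := (intOdd_iff_cast y).mp hY
      obtain ⟨w, hw⟩ := (intOdd_iff_cast z).mp hZ
      refine ⟨u + 1, v + 1, w + 1, ?_, by omega, by omega, by omega⟩
      have h4 : (4 : ℤ) * (a * ((u+1) * ((u+1) - 1)) + b * ((v+1) * ((v+1) - 1))
          + c * ((w+1) * ((w+1) - 1))) = 4 * (2 * n) := by
        subst hu hv hw
        linear_combination h
      exact mul_left_cancel₀ (by norm_num : (4:ℤ) ≠ 0) h4
  unfold ternaryTriangular
  rw [← key, Set.ncard_image_of_injective _ hinj]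
end

section
/- Let a, b, c be positive integers with gcd(a,b,c) = 1, where a and b are odd and c is even, and set S = a + b + c. If S ≡ 2 (mod 4) and c ≢ 4 (mod 8), then for every positive integer n, t(a,b,c;n) equals the number of integer triples (x,y,z) ∈ ℤ³ satisfying a·x² + b·y² + c·(y−2z)² = 8n + S. -/
lemma key4 : ∀ a b c X Y Z : ZMod 4,
    (a = 1 ∨ a = 3) → (b = 1 ∨ b = 3) → (c = 0 ∨ c = 2) →
    a * X ^ 2 + b * Y ^ 2 + c * (Y - 2 * Z) ^ 2 = 2 →
    (Y = 1 ∨ Y = 3) := by decide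

lemma odd_cast4 (a : ℤ) (h : Odd a) : (a : ZMod 4) = 1 ∨ (a : ZMod 4) = 3 := by
  obtain ⟨k, rfl⟩ := h
  push_cast
  generalize (k : ZMod 4) = m
  revert m; decide

lemma even_cast4 (c : ℤ) (h : Even c) : (c : ZMod 4) = 0 ∨ (c : ZMod 4) = 2 := by
  obtain ⟨k, rfl⟩ := h
  push_cast
  generalize (k : ZMod 4) = m
  revert m; decide

theorem stmt_3 (a b c : ℤ) (ha : 0 < a) (hb : 0 < b) (hc : 0 < c)
    (hgcd : Int.gcd (Int.gcd a b) c = 1)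
    (hao : Odd a) (hbo : Odd b) (hce : Even c)
    (hS : a + b + c ≡ 2 [ZMOD 4]) (hc4 : ¬ c ≡ 4 [ZMOD 8])
    (n : ℤ) (hn : 0 < n) :
    ternaryTriangular a b c n =
      {p : ℤ × ℤ × ℤ | a * p.1 ^ 2 + b * p.2.1 ^ 2
        + c * (p.2.1 - 2 * p.2.2) ^ 2 = 8 * n + (a + b + c)}.ncard := by
  classical
  set f : ℤ × ℤ × ℤ → ℤ × ℤ × ℤ :=
    fun p => (2 * p.1 - 1, 2 * p.2.1 - 1, p.2.1 - p.2.2) with hf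
  have hinj : Function.Injective f := by
    rintro ⟨x, y, z⟩ ⟨x', y', z'⟩ h
    simp only [hf, Prod.mk.injEq] at h
    obtain ⟨h1, h2, h3⟩ := h
    simp only [Prod.mk.injEq]
    refine ⟨by omega, by omega, by omega⟩
  have himg : f '' {p : ℤ × ℤ × ℤ | a * (p.1 * (p.1 - 1)) + b * (p.2.1 * (p.2.1 - 1))
      + c * (p.2.2 * (p.2.2 - 1)) = 2 * n} =
      {p : ℤ × ℤ × ℤ | a * p.1 ^ 2 + b * p.2.1 ^ 2
        + c * (p.2.1 - 2 * p.2.2) ^ 2 = 8 * n + (a + b + c)} := by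
    ext ⟨X, Y, Z⟩
    constructor
    · rintro ⟨⟨x, y, z⟩, hmem, heq⟩
      simp only [Set.mem_setOf_eq] at hmem ⊢
      simp only [hf, Prod.mk.injEq] at heq
      obtain ⟨h1, h2, h3⟩ := heq
      subst h1 h2 h3
      linear_combination 4 * hmem
    · intro hq
      simp only [Set.mem_setOf_eq] at hq
      -- Step 1 : Y is odd
      have hYodd : Odd Y := by
        by_contra hYe
        rw [Int.not_odd_iff_even] at hYe
        have h4 : ((a : ℤ) : ZMod 4) * (X : ZMod 4) ^ 2 + (b : ℤ) * (Y : ZMod 4) ^ 2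
            + (c : ℤ) * ((Y : ZMod 4) - 2 * (Z : ZMod 4)) ^ 2 = 2 := by
          have h2 : ((a : ℤ) : ZMod 4) + (b : ℤ) + (c : ℤ) = 2 := by
            have h2' : (((a + b + c : ℤ)) : ZMod 4) = ((2 : ℤ) : ZMod 4) :=
              (ZMod.intCast_eq_intCast_iff _ _ 4).mpr (by exact_mod_cast hS)
            push_cast at h2'
            exact h2'
          have hcast := congrArg (fun t : ℤ => (t : ZMod 4)) hq
          push_cast at hcast
          refine hcast.trans ?_
          rw [show ((8 : ZMod 4)) = 0 by decide, zero_mul, zero_add, h2]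
        have := key4 (a : ZMod 4) (b : ZMod 4) (c : ZMod 4) X Y Z
          (odd_cast4 a hao) (odd_cast4 b hbo) (even_cast4 c hce) h4
        obtain ⟨k, rfl⟩ := hYe
        revert this
        push_cast
        generalize ((k : ZMod 4)) = m
        revert m; decide
      obtain ⟨v, hv⟩ := hYodd
      -- Step 2 : X is odd
      have hXodd : Odd X := by
        have hs : Even (v * (v + 1)) := Int.even_mul_succ_self v
        have hs' : Even ((v - Z) * (v - Z + 1)) := Int.even_mul_succ_self (v - Z)
        obtain ⟨s, hsEq⟩ := hs
        obtain ⟨s', hsEq'⟩ := hs'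
        have h8 : a * X ^ 2 - a = 8 * (n - b * s - c * s') := by
          subst hv; linear_combination hq - 4 * b * hsEq - 4 * c * hsEq'
        by_contra hXe
        rw [Int.not_odd_iff_even] at hXe
        obtain ⟨u, rfl⟩ := hXe
        have hodd : Odd (a * ((u + u) ^ 2 - 1)) := by
          refine hao.mul ⟨2 * u ^ 2 - 1, by ring⟩
        have heven : Even (a * ((u + u) ^ 2 - 1)) :=
          ⟨4 * (n - b * s - c * s'), by linear_combination h8⟩
        exact ((Int.not_odd_iff_even.mpr heven)) hodd
      obtain ⟨u, hu⟩ := hXodd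
      refine ⟨(u + 1, v + 1, v + 1 - Z), ?_, ?_⟩
      · simp only [Set.mem_setOf_eq]
        have h4 : 4 * (a * ((u + 1) * (u + 1 - 1)) + b * ((v + 1) * (v + 1 - 1))
            + c * ((v + 1 - Z) * (v + 1 - Z - 1))) = 4 * (2 * n) := by
          subst hu hv; linear_combination hq
        exact mul_left_cancel₀ (by norm_num : (4 : ℤ) ≠ 0) h4
      · simp only [hf]
        subst hu hv
        refine Prod.ext (by ring) (Prod.ext (by ring) (by ring))
  rw [ternaryTriangular, ← himg, Set.ncard_image_of_injective _ hinj]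
end

section
/- Let a, b, c be positive integers with gcd(a,b,c) = 1, where a and b are odd and c is even, and set S = a + b + c. If S ≡ 4 (mod 8) and c ≡ 2 (mod 4), then for every positive integer n, t(a,b,c;n) equals twice the number of integer triples (x,y,z) ∈ ℤ³ satisfying a·x² + b·(x−4y)² + c·z² = 8n + S. -/
private lemma aux_L1 (a u : ℤ) (ha : Odd a) : (2:ℤ) ∣ a * u ^ 2 - u := by
  obtain ⟨j, rfl⟩ := ha
  rcases Int.even_or_odd u with ⟨k, rfl⟩ | ⟨k, rfl⟩
  · exact ⟨(2*j+1)*2*k^2 - k, by ring⟩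
  · exact ⟨(2*k+1)*(2*j*k+j+k), by ring⟩

private lemma aux_L2 (u : ℤ) (h : Odd u) : (8:ℤ) ∣ u ^ 2 - 1 := by
  obtain ⟨k, rfl⟩ := h
  rcases Int.even_or_odd k with ⟨m, rfl⟩ | ⟨m, rfl⟩
  · exact ⟨2*m^2 + m, by ring⟩
  · exact ⟨(2*m+1)*(m+1), by ring⟩

private lemma int_le_sq (u : ℤ) : u ≤ u ^ 2 := by
  rcases le_or_gt u 0 with h | h
  · nlinarith [sq_nonneg u]
  · nlinarith [h]

/-- The key forcing lemma: in any solution with `u ≡ ±v (mod 4)`, all of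
`u, v, w` are odd. -/
private lemma forcing (a b c n u v w : ℤ) (hao : Odd a) (hbo : Odd b) (hce : Even c)
    (hS : (a + b + c) % 8 = 4) (hc4 : c % 4 = 2)
    (heq : a * u ^ 2 + b * v ^ 2 + c * w ^ 2 = 8 * n + (a + b + c))
    (h4 : 4 ∣ u - v ∨ 4 ∣ u + v) : Odd u ∧ Odd v ∧ Odd w := by
  have ha2 : a % 2 = 1 := Int.odd_iff.mp hao
  have hb2 : b % 2 = 1 := Int.odd_iff.mp hbo
  have hc2 : c % 2 = 0 := Int.even_iff.mp hce
  have d1 : (2:ℤ) ∣ a * u ^ 2 - u := aux_L1 a u hao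
  have d2 : (2:ℤ) ∣ b * v ^ 2 - v := aux_L1 b v hbo
  have d3 : (2:ℤ) ∣ c * w ^ 2 := by
    obtain ⟨t, rfl⟩ := hce
    exact ⟨t * w ^ 2, by ring⟩
  -- u and v have the same parity
  have huv2 : u % 2 = v % 2 := by
    have e := heq
    have e1 := d1; have e2 := d2; have e3 := d3
    set A := a * u ^ 2 with hA; clear_value A
    set B := b * v ^ 2 with hB; clear_value B
    set C := c * w ^ 2 with hC; clear_value C
    omega
  have hu : u % 2 = 1 := by
    by_contra hcon
    have hu0 : u % 2 = 0 := by omega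
    have hv0 : v % 2 = 0 := by omega
    obtain ⟨u', rfl⟩ : ∃ t, u = 2 * t := ⟨u / 2, by omega⟩
    obtain ⟨v', rfl⟩ : ∃ t, v = 2 * t := ⟨v / 2, by omega⟩
    -- first, w must be even
    have hw0 : w % 2 = 0 := by
      have e : 4 * (a * u' ^ 2) + 4 * (b * v' ^ 2) + ((c - 2) * w ^ 2 + 2 * (w ^ 2))
          = 8 * n + (a + b + c) := by linear_combination heq
      have d4 : (4:ℤ) ∣ (c - 2) * w ^ 2 := by
        obtain ⟨k, hk⟩ : ∃ k, c = 4 * k + 2 := ⟨c / 4, by omega⟩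
        exact ⟨k * w ^ 2, by rw [hk]; ring⟩
      have dw : (2:ℤ) ∣ w ^ 2 - w := by
        have := aux_L1 1 w odd_one
        simpa using this
      set A := a * u' ^ 2 with hA; clear_value A
      set B := b * v' ^ 2 with hB; clear_value B
      set D := (c - 2) * w ^ 2 with hD; clear_value D
      set W := w ^ 2 with hW; clear_value W
      omega
    obtain ⟨w', rfl⟩ : ∃ t, w = 2 * t := ⟨w / 2, by omega⟩
    have e : 4 * (a * u' ^ 2) + 4 * (b * v' ^ 2) + 4 * (c * w' ^ 2)
        = 8 * n + (a + b + c) := by linear_combination heq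
    have d1' : (2:ℤ) ∣ a * u' ^ 2 - u' := aux_L1 a u' hao
    have d2' : (2:ℤ) ∣ b * v' ^ 2 - v' := aux_L1 b v' hbo
    have d3' : (2:ℤ) ∣ c * w' ^ 2 := by
      obtain ⟨t, rfl⟩ := hce
      exact ⟨t * w' ^ 2, by ring⟩
    have h4' : (2:ℤ) ∣ u' - v' := by rcases h4 with h | h <;> omega
    set A := a * u' ^ 2 with hA; clear_value A
    set B := b * v' ^ 2 with hB; clear_value B
    set C := c * w' ^ 2 with hC; clear_value C
    omega
  have hv : v % 2 = 1 := by omega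
  have hw : w % 2 = 1 := by
    by_contra hcon
    have hw0 : w % 2 = 0 := by omega
    obtain ⟨w', rfl⟩ : ∃ t, w = 2 * t := ⟨w / 2, by omega⟩
    obtain ⟨ka, hka⟩ := aux_L2 u (Int.odd_iff.mpr hu)
    obtain ⟨kb, hkb⟩ := aux_L2 v (Int.odd_iff.mpr hv)
    have dA : (8:ℤ) ∣ a * u ^ 2 - a := ⟨a * ka, by linear_combination a * hka⟩
    have dB : (8:ℤ) ∣ b * v ^ 2 - b := ⟨b * kb, by linear_combination b * hkb⟩
    obtain ⟨c₀, hc0⟩ : ∃ t, c = 2 * t := ⟨c / 2, by omega⟩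
    have hc0odd : c₀ % 2 = 1 := by omega
    have e : (a * u ^ 2 - a) + (b * v ^ 2 - b) + (8 * (c₀ * w' ^ 2) - 2 * c₀)
        = 8 * n := by linear_combination heq - (4 * w' ^ 2 - 1) * hc0
    set A := a * u ^ 2 - a with hA; clear_value A
    set B := b * v ^ 2 - b with hB; clear_value B
    set Z := c₀ * w' ^ 2 with hZ; clear_value Z
    omega
  exact ⟨Int.odd_iff.mpr hu, Int.odd_iff.mpr hv, Int.odd_iff.mpr hw⟩

private lemma sol_finite (a b c M : ℤ) (ha : 0 < a) (hb : 0 < b) (hc : 0 < c)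
    (P : ℤ × ℤ × ℤ → Prop) :
    {p : ℤ × ℤ × ℤ | a * p.1 ^ 2 + b * p.2.1 ^ 2 + c * p.2.2 ^ 2 = M ∧ P p}.Finite := by
  apply Set.Finite.subset (Set.finite_Icc ((-M, -M, -M) : ℤ × ℤ × ℤ) (M, M, M))
  rintro ⟨u, v, w⟩ ⟨h, -⟩
  simp only [Set.mem_setOf_eq] at h
  have h1 : (1:ℤ) ≤ a := ha
  have h2 : (1:ℤ) ≤ b := hb
  have h3 : (1:ℤ) ≤ c := hc
  have hu2 : u ^ 2 ≤ M := by nlinarith [sq_nonneg u, sq_nonneg v, sq_nonneg w]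
  have hv2 : v ^ 2 ≤ M := by nlinarith [sq_nonneg u, sq_nonneg v, sq_nonneg w]
  have hw2 : w ^ 2 ≤ M := by nlinarith [sq_nonneg u, sq_nonneg v, sq_nonneg w]
  simp only [Set.mem_Icc, Prod.le_def]
  refine ⟨⟨by nlinarith [int_le_sq (-u)], by nlinarith [int_le_sq (-v)],
    by nlinarith [int_le_sq (-w)]⟩, by nlinarith [int_le_sq u],
    by nlinarith [int_le_sq v], by nlinarith [int_le_sq w]⟩

theorem stmt_4 (a b c : ℤ) (ha : 0 < a) (hb : 0 < b) (hc : 0 < c)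
    (hgcd : Int.gcd (Int.gcd a b) c = 1)
    (hao : Odd a) (hbo : Odd b) (hce : Even c)
    (hS : a + b + c ≡ 4 [ZMOD 8]) (hc2 : c ≡ 2 [ZMOD 4])
    (n : ℤ) (hn : 0 < n) :
    ternaryTriangular a b c n =
      2 * {p : ℤ × ℤ × ℤ | a * p.1 ^ 2 + b * (p.1 - 4 * p.2.1) ^ 2
        + c * p.2.2 ^ 2 = 8 * n + (a + b + c)}.ncard := by
  have hS8 : (a + b + c) % 8 = 4 := by
    have := Int.ModEq.dvd hS
    omega
  have hc4 : c % 4 = 2 := by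
    have := Int.ModEq.dvd hc2
    omega
  set M : ℤ := 8 * n + (a + b + c) with hM
  -- The three key sets
  set O : Set (ℤ × ℤ × ℤ) := {p | a * p.1 ^ 2 + b * p.2.1 ^ 2 + c * p.2.2 ^ 2 = M
    ∧ (Odd p.1 ∧ Odd p.2.1 ∧ Odd p.2.2)} with hO
  set T : Set (ℤ × ℤ × ℤ) := {p | a * p.1 ^ 2 + b * p.2.1 ^ 2 + c * p.2.2 ^ 2 = M
    ∧ 4 ∣ p.1 - p.2.1} with hT
  set T' : Set (ℤ × ℤ × ℤ) := {p | a * p.1 ^ 2 + b * p.2.1 ^ 2 + c * p.2.2 ^ 2 = M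
    ∧ 4 ∣ p.1 + p.2.1} with hT'
  have hTfin : T.Finite := sol_finite a b c M ha hb hc _
  have hT'fin : T'.Finite := sol_finite a b c M ha hb hc _
  -- Step 1: LHS = O.ncard
  have step1 : ternaryTriangular a b c n = O.ncard := by
    have himg : O = (fun p : ℤ × ℤ × ℤ => (2 * p.1 - 1, 2 * p.2.1 - 1, 2 * p.2.2 - 1)) ''
        {p : ℤ × ℤ × ℤ | a * (p.1 * (p.1 - 1)) + b * (p.2.1 * (p.2.1 - 1))
          + c * (p.2.2 * (p.2.2 - 1)) = 2 * n} := by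
      ext ⟨u, v, w⟩
      simp only [hO, Set.mem_setOf_eq, Set.mem_image, Prod.mk.injEq, Prod.exists]
      constructor
      · rintro ⟨heq, ⟨k, rfl⟩, ⟨l, rfl⟩, ⟨m, rfl⟩⟩
        refine ⟨k + 1, l + 1, m + 1, ?_, by ring, by ring, by ring⟩
        have h4 : (4:ℤ) * (a * ((k+1) * ((k+1) - 1)) + b * ((l+1) * ((l+1) - 1))
            + c * ((m+1) * ((m+1) - 1))) = 4 * (2 * n) := by
          rw [hM] at heq
          linear_combination heq
        have := mul_left_cancel₀ (by norm_num : (4:ℤ) ≠ 0) h4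
        exact this
      · rintro ⟨x, y, z, heq, rfl, rfl, rfl⟩
        refine ⟨?_, ⟨x - 1, by ring⟩, ⟨y - 1, by ring⟩, ⟨z - 1, by ring⟩⟩
        rw [hM]
        linear_combination 4 * heq
    rw [ternaryTriangular, himg]
    symm
    apply Set.ncard_image_of_injective
    intro p q hpq
    simp only [Prod.mk.injEq] at hpq
    obtain ⟨h1, h2, h3⟩ := hpq
    exact Prod.ext (by omega) (Prod.ext (by omega) (by omega))
  -- Step 2: RHS set has same ncard as T
  have step2 : {p : ℤ × ℤ × ℤ | a * p.1 ^ 2 + b * (p.1 - 4 * p.2.1) ^ 2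
      + c * p.2.2 ^ 2 = 8 * n + (a + b + c)}.ncard = T.ncard := by
    have himg : T = (fun p : ℤ × ℤ × ℤ => (p.1, p.1 - 4 * p.2.1, p.2.2)) ''
        {p : ℤ × ℤ × ℤ | a * p.1 ^ 2 + b * (p.1 - 4 * p.2.1) ^ 2
          + c * p.2.2 ^ 2 = 8 * n + (a + b + c)} := by
      ext ⟨u, v, w⟩
      simp only [hT, Set.mem_setOf_eq, Set.mem_image, Prod.mk.injEq, Prod.exists]
      constructor
      · rintro ⟨heq, ⟨y, hy⟩⟩
        refine ⟨u, y, w, ?_, rfl, by omega, rfl⟩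
        have hv : v = u - 4 * y := by omega
        rw [hM] at heq
        rw [← hv]
        linear_combination heq
      · rintro ⟨x, y, z, heq, rfl, rfl, rfl⟩
        exact ⟨by rw [hM]; linear_combination heq, ⟨y, by ring⟩⟩
    rw [himg]
    symm
    apply Set.ncard_image_of_injective
    intro p q hpq
    simp only [Prod.mk.injEq] at hpq
    obtain ⟨h1, h2, h3⟩ := hpq
    exact Prod.ext h1 (Prod.ext (by omega) h3)
  -- Step 3: O = T ∪ T', disjoint
  have hsub : ∀ p : ℤ × ℤ × ℤ, p ∈ T ∪ T' → (Odd p.1 ∧ Odd p.2.1 ∧ Odd p.2.2) := by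
    rintro ⟨u, v, w⟩ hp
    rcases hp with ⟨heq, hd⟩ | ⟨heq, hd⟩
    · exact forcing a b c n u v w hao hbo hce hS8 hc4 (by rw [← hM]; exact heq) (Or.inl hd)
    · exact forcing a b c n u v w hao hbo hce hS8 hc4 (by rw [← hM]; exact heq) (Or.inr hd)
  have hOeq : O = T ∪ T' := by
    ext ⟨u, v, w⟩
    constructor
    · rintro ⟨heq, hu, hv, hw⟩
      have hu' : u % 2 = 1 := Int.odd_iff.mp hu
      have hv' : v % 2 = 1 := Int.odd_iff.mp hv
      have : 4 ∣ u - v ∨ 4 ∣ u + v := by omega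
      rcases this with h | h
      · exact Or.inl ⟨heq, h⟩
      · exact Or.inr ⟨heq, h⟩
    · intro hp
      have hodd := hsub _ hp
      rcases hp with ⟨heq, -⟩ | ⟨heq, -⟩ <;> exact ⟨heq, hodd⟩
  have hdisj : Disjoint T T' := by
    rw [Set.disjoint_left]
    rintro ⟨u, v, w⟩ ⟨heq, hd⟩ ⟨heq', hd'⟩
    have hodd := hsub (u, v, w) (Or.inl ⟨heq, hd⟩)
    have hu' : u % 2 = 1 := Int.odd_iff.mp hodd.1
    simp only at hd hd'
    omega
  have hcard' : T'.ncard = T.ncard := by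
    have himg : T' = (fun p : ℤ × ℤ × ℤ => (p.1, -p.2.1, p.2.2)) '' T := by
      ext ⟨u, v, w⟩
      simp only [hT, hT', Set.mem_setOf_eq, Set.mem_image, Prod.mk.injEq, Prod.exists]
      constructor
      · rintro ⟨heq, hd⟩
        exact ⟨u, -v, w, ⟨by linear_combination heq, by omega⟩, rfl, by ring, rfl⟩
      · rintro ⟨x, y, z, ⟨heq, hd⟩, rfl, rfl, rfl⟩
        exact ⟨by linear_combination heq, by omega⟩
    rw [himg]
    apply Set.ncard_image_of_injective
    intro p q hpq
    simp only [Prod.mk.injEq] at hpq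
    obtain ⟨h1, h2, h3⟩ := hpq
    exact Prod.ext h1 (Prod.ext (by omega) h3)
  rw [step1, step2, hOeq, Set.ncard_union_eq hdisj hTfin hT'fin, hcard']
  ring
end

section
/- Let a, b, c be positive integers with gcd(a,b,c) = 1, where a and b are odd and c is even, and set S = a + b + c. If S ≡ 4 (mod 8) and c ≡ 0 (mod 4), then for every positive integer n, t(a,b,c;n) equals twice the number of integer triples (x,y,z) ∈ ℤ³ satisfying a·x² + b·(x−4y)² + c·(x−2z)² = 8n + S. -/
private lemma sq_bound' {x M : ℤ} (h : x ^ 2 ≤ M) : -M ≤ x ∧ x ≤ M := by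
  constructor <;> nlinarith [sq_nonneg x, sq_nonneg (x + 1), sq_nonneg (x - 1)]

private lemma quad_finite (a b c M : ℤ) (ha : 0 < a) (hb : 0 < b) (hc : 0 < c) :
    {q : ℤ × ℤ × ℤ | a * q.1 ^ 2 + b * q.2.1 ^ 2 + c * q.2.2 ^ 2 = M}.Finite := by
  apply Set.Finite.subset (Set.finite_Icc (⟨-M, -M, -M⟩ : ℤ × ℤ × ℤ) ⟨M, M, M⟩)
  rintro ⟨x, y, z⟩ hq
  simp only [Set.mem_setOf_eq] at hq
  have h1 : x ^ 2 ≤ M := by nlinarith [sq_nonneg x, sq_nonneg y, sq_nonneg z]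
  have h2 : y ^ 2 ≤ M := by nlinarith [sq_nonneg x, sq_nonneg y, sq_nonneg z]
  have h3 : z ^ 2 ≤ M := by nlinarith [sq_nonneg x, sq_nonneg y, sq_nonneg z]
  obtain ⟨hx1, hx2⟩ := sq_bound' h1
  obtain ⟨hy1, hy2⟩ := sq_bound' h2
  obtain ⟨hz1, hz2⟩ := sq_bound' h3
  simp only [Set.mem_Icc, Prod.mk_le_mk]
  exact ⟨⟨hx1, hy1, hz1⟩, hx2, hy2, hz2⟩

private lemma key_odd (a b c M : ℤ) (hao : Odd a) (hbo : Odd b) (hc4 : c % 4 = 0)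
    (hM : M % 8 = 4) (x y z : ℤ)
    (h : a * x ^ 2 + b * (x - 4 * y) ^ 2 + c * (x - 2 * z) ^ 2 = M) : Odd x := by
  rcases Int.even_or_odd x with hx | hx
  · exfalso
    obtain ⟨s, rfl⟩ := hx
    obtain ⟨c', rfl⟩ : ∃ c', c = 4 * c' := ⟨c / 4, by omega⟩
    have h2 : 4 * (a * s ^ 2 + b * (s - 2 * y) ^ 2 + 4 * c' * (s - z) ^ 2) = M := by
      linear_combination h
    have heven : Even (a * s ^ 2 + b * (s - 2 * y) ^ 2 + 4 * c' * (s - z) ^ 2) := by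
      rcases Int.even_or_odd s with ⟨t, ht⟩ | ⟨t, ht⟩
      · subst ht
        exact ⟨2 * a * t ^ 2 + 2 * b * (t - y) ^ 2 + 2 * c' * (t + t - z) ^ 2, by ring⟩
      · subst ht
        have hs : Odd (2 * t + 1) := ⟨t, rfl⟩
        have hsy : Odd (2 * t + 1 - 2 * y) := ⟨t - y, by ring⟩
        have hA : Odd (a * (2 * t + 1) ^ 2) := hao.mul hs.pow
        have hB : Odd (b * (2 * t + 1 - 2 * y) ^ 2) := hbo.mul hsy.pow
        exact (hA.add_odd hB).add ⟨2 * c' * (2 * t + 1 - z) ^ 2, by ring⟩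
    obtain ⟨m, hm⟩ := heven
    omega
  · exact hx


theorem stmt_5 (a b c : ℤ) (ha : 0 < a) (hb : 0 < b) (hc : 0 < c)
    (hgcd : Int.gcd (Int.gcd a b) c = 1)
    (hao : Odd a) (hbo : Odd b) (hce : Even c)
    (hS : a + b + c ≡ 4 [ZMOD 8]) (hc0 : c ≡ 0 [ZMOD 4])
    (n : ℤ) (hn : 0 < n) :
    ternaryTriangular a b c n =
      2 * {p : ℤ × ℤ × ℤ | a * p.1 ^ 2 + b * (p.1 - 4 * p.2.1) ^ 2
        + c * (p.1 - 2 * p.2.2) ^ 2 = 8 * n + (a + b + c)}.ncard := by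
  classical
  have hc4 : c % 4 = 0 := by have := hc0; rw [Int.ModEq] at this; omega
  have hS8 : (a + b + c) % 8 = 4 := by have := hS; rw [Int.ModEq] at this; omega
  set M : ℤ := 8 * n + (a + b + c) with hMdef
  have hM8 : M % 8 = 4 := by rw [hMdef]; omega
  set T : Set (ℤ × ℤ × ℤ) := {p | a * (p.1 * (p.1 - 1)) + b * (p.2.1 * (p.2.1 - 1))
    + c * (p.2.2 * (p.2.2 - 1)) = 2 * n} with hTdef
  set R : Set (ℤ × ℤ × ℤ) := {p | a * p.1 ^ 2 + b * (p.1 - 4 * p.2.1) ^ 2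
    + c * (p.1 - 2 * p.2.2) ^ 2 = M} with hRdef
  set O : Set (ℤ × ℤ × ℤ) := {q | (a * q.1 ^ 2 + b * q.2.1 ^ 2 + c * q.2.2 ^ 2 = M)
    ∧ Odd q.1 ∧ Odd q.2.1 ∧ Odd q.2.2} with hOdef
  set Op : Set (ℤ × ℤ × ℤ) := O ∩ {q | (4 : ℤ) ∣ q.1 - q.2.1} with hOpdef
  set Om : Set (ℤ × ℤ × ℤ) := O ∩ {q | (4 : ℤ) ∣ q.1 + q.2.1} with hOmdef
  -- step 1 : O is the image of T
  have hψinj : Function.Injective (fun p : ℤ × ℤ × ℤ =>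
      ((2 * p.1 - 1, 2 * p.2.1 - 1, 2 * p.2.2 - 1) : ℤ × ℤ × ℤ)) := by
    rintro ⟨x, y, z⟩ ⟨x', y', z'⟩ h
    simp only [Prod.ext_iff, Prod.mk.injEq] at h ⊢
    omega
  have hOT : O = (fun p : ℤ × ℤ × ℤ =>
      ((2 * p.1 - 1, 2 * p.2.1 - 1, 2 * p.2.2 - 1) : ℤ × ℤ × ℤ)) '' T := by
    ext q
    constructor
    · obtain ⟨u, v, w⟩ := q
      rintro ⟨heq, ⟨x, rfl⟩, ⟨y, rfl⟩, ⟨z, rfl⟩⟩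
      refine ⟨(x + 1, y + 1, z + 1), ?_, by simp only [Prod.mk.injEq]; omega⟩
      have key : 4 * (a * ((x + 1) * ((x + 1) - 1)) + b * ((y + 1) * ((y + 1) - 1))
          + c * ((z + 1) * ((z + 1) - 1))) = 4 * (2 * n) := by
        simp only [Set.mem_setOf_eq] at heq
        linear_combination heq
      have := mul_left_cancel₀ (show (4 : ℤ) ≠ 0 by norm_num) key
      exact this
    · rintro ⟨⟨x, y, z⟩, hp, rfl⟩
      simp only [hTdef, Set.mem_setOf_eq] at hp
      refine ⟨?_, ⟨x - 1, by ring⟩, ⟨y - 1, by ring⟩, ⟨z - 1, by ring⟩⟩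
      show a * (2 * x - 1) ^ 2 + b * (2 * y - 1) ^ 2 + c * (2 * z - 1) ^ 2 = M
      rw [hMdef]; linear_combination 4 * hp
  -- step 2 : Op is the image of R
  have hθinj : Function.Injective (fun p : ℤ × ℤ × ℤ =>
      ((p.1, p.1 - 4 * p.2.1, p.1 - 2 * p.2.2) : ℤ × ℤ × ℤ)) := by
    rintro ⟨x, y, z⟩ ⟨x', y', z'⟩ h
    simp only [Prod.ext_iff, Prod.mk.injEq] at h ⊢
    omega
  have hOpR : Op = (fun p : ℤ × ℤ × ℤ =>
      ((p.1, p.1 - 4 * p.2.1, p.1 - 2 * p.2.2) : ℤ × ℤ × ℤ)) '' R := by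
    ext q
    constructor
    · obtain ⟨u, v, w⟩ := q
      rintro ⟨⟨heq, hu, hv, hw⟩, hd⟩
      simp only [Set.mem_setOf_eq] at heq hd
      obtain ⟨y, hy⟩ := hd
      obtain ⟨k, rfl⟩ := hu
      obtain ⟨l, rfl⟩ := hw
      refine ⟨(2 * k + 1, y, k - l), ?_, ?_⟩
      swap
      · show ((2 * k + 1, 2 * k + 1 - 4 * y, 2 * k + 1 - 2 * (k - l)) : ℤ × ℤ × ℤ)
          = (2 * k + 1, v, 2 * l + 1)
        simp only [Prod.mk.injEq]
        exact ⟨trivial, by omega, by omega⟩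
      simp only [hRdef, Set.mem_setOf_eq]
      have hv' : 2 * k + 1 - 4 * y = v := by omega
      rw [hv']
      linear_combination heq
    · rintro ⟨⟨x, y, z⟩, hp, rfl⟩
      simp only [hRdef, Set.mem_setOf_eq] at hp
      have hx : Odd x := key_odd a b c M hao hbo hc4 hM8 x y z hp
      obtain ⟨k, hk⟩ := hx
      show ((x, x - 4 * y, x - 2 * z) : ℤ × ℤ × ℤ) ∈ Op
      have hv : Odd (x - 4 * y) := ⟨k - 2 * y, by omega⟩
      have hw : Odd (x - 2 * z) := ⟨k - z, by omega⟩
      refine ⟨⟨?_, ⟨k, hk⟩, hv, hw⟩, ?_⟩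
      · show a * x ^ 2 + b * (x - 4 * y) ^ 2 + c * (x - 2 * z) ^ 2 = M
        exact hp
      · show (4 : ℤ) ∣ x - (x - 4 * y)
        exact ⟨y, by ring⟩
  -- step 3 : Om is the image of Op under negating the middle coordinate
  have hginj : Function.Injective (fun q : ℤ × ℤ × ℤ =>
      ((q.1, -q.2.1, q.2.2) : ℤ × ℤ × ℤ)) := by
    rintro ⟨x, y, z⟩ ⟨x', y', z'⟩ h
    simp only [Prod.ext_iff, Prod.mk.injEq] at h ⊢
    omega
  have hOmOp : Om = (fun q : ℤ × ℤ × ℤ =>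
      ((q.1, -q.2.1, q.2.2) : ℤ × ℤ × ℤ)) '' Op := by
    ext q
    constructor
    · obtain ⟨u, v, w⟩ := q
      rintro ⟨⟨heq, hu, hv, hw⟩, hd⟩
      simp only [Set.mem_setOf_eq] at heq hd
      refine ⟨(u, -v, w), ⟨⟨by simp only [Set.mem_setOf_eq]; linear_combination heq,
        hu, hv.neg, hw⟩, ?_⟩, by simp⟩
      simp only [Set.mem_setOf_eq]
      omega
    · rintro ⟨⟨u', v', w'⟩, ⟨⟨heq, hu, hv, hw⟩, hd⟩, rfl⟩
      simp only [Set.mem_setOf_eq] at heq hd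
      refine ⟨⟨?_, hu, hv.neg, hw⟩, ?_⟩
      · show a * u' ^ 2 + b * (-v') ^ 2 + c * w' ^ 2 = M
        linear_combination heq
      · show (4 : ℤ) ∣ u' + -v'
        omega
  -- step 4 : O = Op ∪ Om, disjointly
  have hunion : O = Op ∪ Om := by
    ext ⟨u, v, w⟩
    constructor
    · intro hq
      obtain ⟨heq, hu, hv, hw⟩ := hq
      have hu2 : u % 2 = 1 := Int.odd_iff.mp hu
      have hv2 : v % 2 = 1 := Int.odd_iff.mp hv
      have : (4 : ℤ) ∣ u - v ∨ (4 : ℤ) ∣ u + v := by omega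
      rcases this with h | h
      · exact Or.inl ⟨⟨heq, hu, hv, hw⟩, h⟩
      · exact Or.inr ⟨⟨heq, hu, hv, hw⟩, h⟩
    · rintro (⟨hq, _⟩ | ⟨hq, _⟩) <;> exact hq
  have hdisj : Disjoint Op Om := by
    rw [Set.disjoint_left]
    rintro ⟨u, v, w⟩ ⟨⟨_, hu, hv, _⟩, hd1⟩ ⟨_, hd2⟩
    simp only [Set.mem_setOf_eq] at hd1 hd2
    have hu2 : u % 2 = 1 := Int.odd_iff.mp hu
    have hv2 : v % 2 = 1 := Int.odd_iff.mp hv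
    omega
  -- finiteness
  have fin : ({q : ℤ × ℤ × ℤ | a * q.1 ^ 2 + b * q.2.1 ^ 2 + c * q.2.2 ^ 2 = M}).Finite :=
    quad_finite a b c M ha hb hc
  have finO : O.Finite := fin.subset (fun q hq => hq.1)
  have finOp : Op.Finite := finO.subset Set.inter_subset_left
  have finOm : Om.Finite := finO.subset Set.inter_subset_left
  -- counting
  have e1 : T.ncard = O.ncard := by
    rw [hOT, Set.ncard_image_of_injective _ hψinj]
  have e2 : O.ncard = Op.ncard + Om.ncard := by
    rw [hunion, Set.ncard_union_eq hdisj finOp finOm]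
  have e3 : Op.ncard = R.ncard := by
    rw [hOpR, Set.ncard_image_of_injective _ hθinj]
  have e4 : Om.ncard = Op.ncard := by
    rw [hOmOp, Set.ncard_image_of_injective _ hginj]
  show T.ncard = 2 * R.ncard
  omega
end

section
/- Let a, b, c be positive integers with gcd(a,b,c) = 1, where a and b are odd and c is even, and set S = a + b + c. If S ≡ 0 (mod 8), then for every positive integer n, t(a,b,c;n) equals the number of integer triples (x,y,z) with a·x² + b·(x−2y)² + c·(x−2z)² = 8n + S minus the number of integer triples (x,y,z) with a·x² + b·y² + c·z² = 2n + S/4. -/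
private lemma int_self_le_sq (t : ℤ) : t ≤ t ^ 2 := by
  rcases le_or_gt t 0 with h | h
  · nlinarith [sq_nonneg t]
  · nlinarith

private lemma int_neg_le_sq (t : ℤ) : -t ≤ t ^ 2 := by
  have := int_self_le_sq (-t)
  simpa using this

theorem stmt_6 (a b c : ℤ) (ha : 0 < a) (hb : 0 < b) (hc : 0 < c)
    (hgcd : Int.gcd (Int.gcd a b) c = 1)
    (hao : Odd a) (hbo : Odd b) (hce : Even c)
    (hS : a + b + c ≡ 0 [ZMOD 8])
    (n : ℤ) (hn : 0 < n) :
    (ternaryTriangular a b c n : ℤ) =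
      ({p : ℤ × ℤ × ℤ | a * p.1 ^ 2 + b * (p.1 - 2 * p.2.1) ^ 2
          + c * (p.1 - 2 * p.2.2) ^ 2 = 8 * n + (a + b + c)}.ncard : ℤ)
      - ({p : ℤ × ℤ × ℤ | a * p.1 ^ 2 + b * p.2.1 ^ 2 + c * p.2.2 ^ 2
          = 2 * n + (a + b + c) / 4}.ncard : ℤ) := by
  obtain ⟨k, hk⟩ : (8 : ℤ) ∣ (a + b + c) := (Int.modEq_zero_iff_dvd).mp hS
  have hdiv : 4 * (2 * n + (a + b + c) / 4) = 8 * n + (a + b + c) := by omega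
  set T : Set (ℤ × ℤ × ℤ) := {p : ℤ × ℤ × ℤ | a * (p.1 * (p.1 - 1)) +
      b * (p.2.1 * (p.2.1 - 1)) + c * (p.2.2 * (p.2.2 - 1)) = 2 * n} with hT
  set A : Set (ℤ × ℤ × ℤ) := {p : ℤ × ℤ × ℤ | a * p.1 ^ 2 + b * (p.1 - 2 * p.2.1) ^ 2
      + c * (p.1 - 2 * p.2.2) ^ 2 = 8 * n + (a + b + c)} with hA
  set B : Set (ℤ × ℤ × ℤ) := {p : ℤ × ℤ × ℤ | a * p.1 ^ 2 + b * p.2.1 ^ 2 + c * p.2.2 ^ 2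
      = 2 * n + (a + b + c) / 4} with hB
  set f : ℤ × ℤ × ℤ → ℤ × ℤ × ℤ := fun p => (2 * p.1 - 1, p.1 - p.2.1, p.1 - p.2.2) with hf
  set g : ℤ × ℤ × ℤ → ℤ × ℤ × ℤ := fun p => (2 * p.1, p.1 - p.2.1, p.1 - p.2.2) with hg
  have hfinj : Function.Injective f := by
    rintro ⟨x, y, z⟩ ⟨x', y', z'⟩ h
    simp only [hf, Prod.mk.injEq] at h
    obtain ⟨h1, h2, h3⟩ := h
    refine Prod.ext ?_ (Prod.ext ?_ ?_) <;> simp <;> omega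
  have hginj : Function.Injective g := by
    rintro ⟨x, y, z⟩ ⟨x', y', z'⟩ h
    simp only [hg, Prod.mk.injEq] at h
    obtain ⟨h1, h2, h3⟩ := h
    refine Prod.ext ?_ (Prod.ext ?_ ?_) <;> simp <;> omega
  -- images lie in A
  have hfT : f '' T ⊆ A := by
    rintro _ ⟨⟨x, y, z⟩, hp, rfl⟩
    simp only [hT, Set.mem_setOf_eq] at hp
    simp only [hA, hf, Set.mem_setOf_eq]
    ring_nf
    ring_nf at hp
    nlinarith [hp]
  have hgB : g '' B ⊆ A := by
    rintro _ ⟨⟨x, y, z⟩, hp, rfl⟩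
    simp only [hB, Set.mem_setOf_eq] at hp
    simp only [hA, hg, Set.mem_setOf_eq]
    have h4 : 4 * (a * x ^ 2 + b * y ^ 2 + c * z ^ 2) = 8 * n + (a + b + c) := by
      rw [hp, hdiv]
    ring_nf
    ring_nf at h4
    nlinarith [h4]
  -- A is the disjoint union of the two images
  have hAeq : A = f '' T ∪ g '' B := by
    apply Set.Subset.antisymm
    · rintro ⟨x, y, z⟩ hp
      simp only [hA, Set.mem_setOf_eq] at hp
      rcases Int.even_or_odd x with ⟨m, hm⟩ | ⟨m, hm⟩ <;> subst hm
      · right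
        refine ⟨(m, m - y, m - z), ?_, ?_⟩
        · simp only [hB, Set.mem_setOf_eq]
          have h4 : 4 * (a * m ^ 2 + b * (m - y) ^ 2 + c * (m - z) ^ 2)
              = 4 * (2 * n + (a + b + c) / 4) := by rw [hdiv]; linear_combination hp
          linarith
        · simp only [hg, Prod.mk.injEq]
          refine ⟨by omega, by omega, by omega⟩
      · left
        refine ⟨(m + 1, m + 1 - y, m + 1 - z), ?_, ?_⟩
        · simp only [hT, Set.mem_setOf_eq]
          have h4 : 4 * (a * ((m + 1) * (m + 1 - 1)) + b * ((m + 1 - y) * (m + 1 - y - 1))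
              + c * ((m + 1 - z) * (m + 1 - z - 1))) = 4 * (2 * n) := by linear_combination hp
          linarith
        · simp only [hf, Prod.mk.injEq]
          refine ⟨by omega, by omega, by omega⟩
    · exact Set.union_subset hfT hgB
  have hdisj : Disjoint (f '' T) (g '' B) := by
    rw [Set.disjoint_left]
    rintro _ ⟨⟨x, y, z⟩, _, rfl⟩ ⟨⟨x', y', z'⟩, _, hq⟩
    simp only [hf, hg, Prod.mk.injEq] at hq
    omega
  -- finiteness
  have hAfin : A.Finite := by
    set M : ℤ := 8 * n + (a + b + c) with hM
    apply Set.Finite.subset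
      ((Set.finite_Icc (-M) M).prod ((Set.finite_Icc (-M) M).prod (Set.finite_Icc (-M) M)))
    rintro ⟨x, y, z⟩ hp
    simp only [hA, Set.mem_setOf_eq] at hp
    have hx2 : x ^ 2 ≤ M := by
      nlinarith [mul_nonneg (by linarith : (0:ℤ) ≤ a - 1) (sq_nonneg x),
        mul_nonneg hb.le (sq_nonneg (x - 2 * y)), mul_nonneg hc.le (sq_nonneg (x - 2 * z))]
    have hu2 : (x - 2 * y) ^ 2 ≤ M := by
      nlinarith [mul_nonneg (by linarith : (0:ℤ) ≤ b - 1) (sq_nonneg (x - 2 * y)),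
        mul_nonneg ha.le (sq_nonneg x), mul_nonneg hc.le (sq_nonneg (x - 2 * z))]
    have hv2 : (x - 2 * z) ^ 2 ≤ M := by
      nlinarith [mul_nonneg (by linarith : (0:ℤ) ≤ c - 1) (sq_nonneg (x - 2 * z)),
        mul_nonneg ha.le (sq_nonneg x), mul_nonneg hb.le (sq_nonneg (x - 2 * y))]
    have b1 := int_self_le_sq x
    have b2 := int_neg_le_sq x
    have b3 := int_self_le_sq (x - 2 * y)
    have b4 := int_neg_le_sq (x - 2 * y)
    have b5 := int_self_le_sq (x - 2 * z)
    have b6 := int_neg_le_sq (x - 2 * z)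
    refine ⟨?_, ?_, ?_⟩ <;> simp only [Set.mem_Icc] <;> constructor <;> omega
  have hTfin : T.Finite := by
    have : (f '' T).Finite := hAfin.subset hfT
    exact Set.Finite.of_finite_image this hfinj.injOn
  have hBfin : B.Finite := by
    have : (g '' B).Finite := hAfin.subset hgB
    exact Set.Finite.of_finite_image this hginj.injOn
  have hcard : A.ncard = T.ncard + B.ncard := by
    rw [hAeq, Set.ncard_union_eq hdisj (hTfin.image f) (hBfin.image g),
      Set.ncard_image_of_injective T hfinj, Set.ncard_image_of_injective B hginj]
  have hTdef : ternaryTriangular a b c n = T.ncard := rfl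
  rw [hTdef]
  push_cast [hcard]
  ring
end

section
/- Let m be a positive integer with m ≡ 1 (mod 4). Then twice the number of integer pairs (x,y) with x² + 3y² = m, x odd and y even, equals the number of integer pairs (x,y) with x² + 3y² = 4m and both x and y odd. -/
private lemma parity_aux (x y m : ℤ) (hm : m % 4 = 1) (h : x ^ 2 + 3 * y ^ 2 = m) :
    Odd x ∧ Even y := by
  rcases Int.even_or_odd x with ⟨a, ha⟩ | ⟨a, ha⟩ <;>
    rcases Int.even_or_odd y with ⟨b, hb⟩ | ⟨b, hb⟩ <;> subst ha hb
  · obtain ⟨s, hs⟩ : ∃ s : ℤ, m = 4 * s := ⟨a ^ 2 + 3 * b ^ 2, by rw [← h]; ring⟩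
    omega
  · obtain ⟨s, hs⟩ : ∃ s : ℤ, m = 4 * s + 3 :=
      ⟨a ^ 2 + 3 * b ^ 2 + 3 * b, by rw [← h]; ring⟩
    omega
  · exact ⟨⟨a, rfl⟩, ⟨b, rfl⟩⟩
  · obtain ⟨s, hs⟩ : ∃ s : ℤ, m = 4 * s :=
      ⟨a ^ 2 + a + 3 * b ^ 2 + 3 * b + 1, by rw [← h]; ring⟩
    omega

theorem stmt_7 (m : ℤ) (hm : 0 < m) (h1 : m ≡ 1 [ZMOD 4]) :
    2 * {p : ℤ × ℤ | p.1 ^ 2 + 3 * p.2 ^ 2 = m ∧ Odd p.1 ∧ Even p.2}.ncard =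
      {p : ℤ × ℤ | p.1 ^ 2 + 3 * p.2 ^ 2 = 4 * m ∧ Odd p.1 ∧ Odd p.2}.ncard := by
  have hm4 : m % 4 = 1 := by have := h1; unfold Int.ModEq at this; omega
  set A : Set (ℤ × ℤ) := {p : ℤ × ℤ | p.1 ^ 2 + 3 * p.2 ^ 2 = m ∧ Odd p.1 ∧ Even p.2} with hA
  set f : ℤ × ℤ → ℤ × ℤ := fun p => (p.1 + 3 * p.2, p.1 - p.2) with hf
  set g : ℤ × ℤ → ℤ × ℤ := fun p => (p.1 + 3 * p.2, p.2 - p.1) with hg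
  have hfinj : Function.Injective f := by
    intro p q h
    simp only [hf, Prod.mk.injEq] at h
    obtain ⟨h1, h2⟩ := h
    ext <;> omega
  have hginj : Function.Injective g := by
    intro p q h
    simp only [hg, Prod.mk.injEq] at h
    obtain ⟨h1, h2⟩ := h
    ext <;> omega
  have hAfin : A.Finite := by
    apply Set.Finite.subset (Set.finite_Icc ((-m, -m) : ℤ × ℤ) (m, m))
    rintro ⟨x, y⟩ ⟨hxy, -, -⟩
    simp only [Set.mem_Icc, Prod.mk_le_mk]
    constructor <;> constructor <;> nlinarith [sq_nonneg x, sq_nonneg y, sq_nonneg (x - m),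
      sq_nonneg (x + m), sq_nonneg (y - m), sq_nonneg (y + m)]
  have hBeq : {p : ℤ × ℤ | p.1 ^ 2 + 3 * p.2 ^ 2 = 4 * m ∧ Odd p.1 ∧ Odd p.2} =
      f '' A ∪ g '' A := by
    ext ⟨u, v⟩
    constructor
    · rintro ⟨huv, ⟨a, ha⟩, ⟨b, hb⟩⟩
      have hcases : (4 : ℤ) ∣ u - v ∨ (4 : ℤ) ∣ u + v := by omega
      simp only at huv ha hb
      rcases hcases with ⟨y, hy⟩ | ⟨y, hy⟩
      · left
        refine ⟨(y + v, y), ?_, ?_⟩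
        · have hu : u = v + 4 * y := by omega
          subst hu
          have h4 : 4 * ((y + v) ^ 2 + 3 * y ^ 2) = 4 * m := by linear_combination huv
          have heq : (y + v) ^ 2 + 3 * y ^ 2 = m := by linarith
          exact ⟨heq, (parity_aux _ _ _ hm4 heq).1, (parity_aux _ _ _ hm4 heq).2⟩
        · simp only [hf, Prod.mk.injEq]; constructor <;> omega
      · right
        refine ⟨(y - v, y), ?_, ?_⟩
        · have hu : u = 4 * y - v := by omega
          subst hu
          have h4 : 4 * ((y - v) ^ 2 + 3 * y ^ 2) = 4 * m := by linear_combination huv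
          have heq : (y - v) ^ 2 + 3 * y ^ 2 = m := by linarith
          exact ⟨heq, (parity_aux _ _ _ hm4 heq).1, (parity_aux _ _ _ hm4 heq).2⟩
        · simp only [hg, Prod.mk.injEq]; constructor <;> omega
    · rintro (⟨⟨x, y⟩, ⟨hxy, ⟨a, ha⟩, ⟨b, hb⟩⟩, h⟩ | ⟨⟨x, y⟩, ⟨hxy, ⟨a, ha⟩, ⟨b, hb⟩⟩, h⟩) <;>
        [simp only [hf, Prod.mk.injEq] at h; simp only [hg, Prod.mk.injEq] at h] <;>
        simp only at hxy ha hb <;>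
        obtain ⟨hu, hv⟩ := h
      · refine ⟨by simp only []; rw [← hu, ← hv]; linear_combination 4 * hxy, ?_, ?_⟩
        · exact ⟨a + 3 * b, by omega⟩
        · exact ⟨a - b, by omega⟩
      · refine ⟨by simp only []; rw [← hu, ← hv]; linear_combination 4 * hxy, ?_, ?_⟩
        · exact ⟨a + 3 * b, by omega⟩
        · exact ⟨b - a - 1, by omega⟩
  have hdisj : Disjoint (f '' A) (g '' A) := by
    rw [Set.disjoint_left]
    rintro ⟨u, v⟩ ⟨⟨x, y⟩, ⟨-, -, ⟨b, hb⟩⟩, hfxy⟩ ⟨⟨x', y'⟩, ⟨-, ⟨a', ha'⟩, ⟨b', hb'⟩⟩, hgxy⟩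
    simp only [hf, Prod.mk.injEq] at hfxy
    simp only [hg, Prod.mk.injEq] at hgxy
    omega
  rw [hBeq, Set.ncard_union_eq hdisj (hAfin.image f) (hAfin.image g),
    Set.ncard_image_of_injective A hfinj, Set.ncard_image_of_injective A hginj]
  ring
end

section
/- Let m be a positive integer with m ≡ 3 (mod 4). Then twice the number of integer pairs (x,y) with x² + 3y² = m, x even and y odd, equals the number of integer pairs (x,y) with x² + 3y² = 4m and both x and y odd. -/
private lemma finsol (N : ℤ) : {p : ℤ × ℤ | p.1 ^ 2 + 3 * p.2 ^ 2 = N}.Finite := by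
  apply Set.Finite.subset (Set.finite_Icc ((-N, -N) : ℤ × ℤ) (N, N))
  rintro ⟨x, y⟩ h
  simp only [Set.mem_setOf_eq] at h
  simp only [Set.mem_Icc, Prod.mk_le_mk]
  refine ⟨⟨?_, ?_⟩, ?_, ?_⟩ <;>
    nlinarith [sq_nonneg x, sq_nonneg y, sq_nonneg (x - 1), sq_nonneg (x + 1),
      sq_nonneg (y - 1), sq_nonneg (y + 1)]

private lemma parity_of (x y m : ℤ) (hm : m % 4 = 3) (h : x ^ 2 + 3 * y ^ 2 = m) :
    Even x ∧ Odd y := by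
  rcases Int.even_or_odd x with ⟨a, ha⟩ | ⟨a, ha⟩ <;>
      rcases Int.even_or_odd y with ⟨b, hb⟩ | ⟨b, hb⟩
  · exfalso
    have h4 : m = 4 * (a * a + 3 * (b * b)) := by subst ha hb; linear_combination -h
    obtain ⟨C, hC⟩ : ∃ C, a * a + 3 * (b * b) = C := ⟨_, rfl⟩
    rw [hC] at h4; omega
  · exact ⟨⟨a, ha⟩, ⟨b, hb⟩⟩
  · exfalso
    have h4 : m = 4 * (a * a + a + 3 * (b * b)) + 1 := by subst ha hb; linear_combination -h
    obtain ⟨C, hC⟩ : ∃ C, a * a + a + 3 * (b * b) = C := ⟨_, rfl⟩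
    rw [hC] at h4; omega
  · exfalso
    have h4 : m = 4 * (a * a + a + 3 * (b * b) + 3 * b + 1) := by
      subst ha hb; linear_combination -h
    obtain ⟨C, hC⟩ : ∃ C, a * a + a + 3 * (b * b) + 3 * b + 1 = C := ⟨_, rfl⟩
    rw [hC] at h4; omega

theorem stmt_8 (m : ℤ) (hm : 0 < m) (h3 : m ≡ 3 [ZMOD 4]) :
    2 * {p : ℤ × ℤ | p.1 ^ 2 + 3 * p.2 ^ 2 = m ∧ Even p.1 ∧ Odd p.2}.ncard =
      {p : ℤ × ℤ | p.1 ^ 2 + 3 * p.2 ^ 2 = 4 * m ∧ Odd p.1 ∧ Odd p.2}.ncard := by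
  have hm4 : m % 4 = 3 := by
    have := h3
    simp only [Int.ModEq] at this
    omega
  set A := {p : ℤ × ℤ | p.1 ^ 2 + 3 * p.2 ^ 2 = m ∧ Even p.1 ∧ Odd p.2} with hA
  set B := {p : ℤ × ℤ | p.1 ^ 2 + 3 * p.2 ^ 2 = 4 * m ∧ Odd p.1 ∧ Odd p.2} with hB
  set B1 := {p : ℤ × ℤ | p ∈ B ∧ (4 : ℤ) ∣ p.1 - p.2} with hB1
  set B2 := {p : ℤ × ℤ | p ∈ B ∧ ¬ (4 : ℤ) ∣ p.1 - p.2} with hB2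
  have hBfin : B.Finite := (finsol (4 * m)).subset (fun p hp => hp.1)
  have hB1fin : B1.Finite := hBfin.subset (fun p hp => hp.1)
  have hB2fin : B2.Finite := hBfin.subset (fun p hp => hp.1)
  -- split
  have hsplit : B.ncard = B1.ncard + B2.ncard := by
    rw [← Set.ncard_union_eq ?_ hB1fin hB2fin]
    · congr 1
      ext p
      by_cases h : (4 : ℤ) ∣ p.1 - p.2 <;> simp [hB1, hB2, hB, h]
    · rw [Set.disjoint_left]
      rintro p ⟨_, h1⟩ ⟨_, h2⟩
      exact h2 h1
  -- B2 = image of B1 under (u,v) ↦ (u,-v)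
  have himg : B2 = (fun p : ℤ × ℤ => (p.1, -p.2)) '' B1 := by
    ext ⟨u, v⟩
    simp only [hB1, hB2, hB, Set.mem_setOf_eq, Set.mem_image, Prod.mk.injEq, Prod.exists]
    constructor
    · rintro ⟨⟨heq, ⟨a, ha⟩, ⟨b, hb⟩⟩, hdvd⟩
      refine ⟨u, -v, ⟨⟨by linear_combination heq, ⟨a, ha⟩, ⟨-b - 1, by omega⟩⟩, ?_⟩, rfl, by ring⟩
      omega
    · rintro ⟨a, b, ⟨⟨heq, ⟨c, hc⟩, ⟨d, hd⟩⟩, hdvd⟩, rfl, rfl⟩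
      refine ⟨⟨by linear_combination heq, ⟨c, hc⟩, ⟨-d - 1, by omega⟩⟩, ?_⟩
      omega
  have h12 : B1.ncard = B2.ncard := by
    rw [himg, Set.ncard_image_of_injective]
    intro p q hpq
    simp only [Prod.mk.injEq] at hpq
    exact Prod.ext hpq.1 (by omega)
  -- A bijects to B1 via (x,y) ↦ (x+3y, x−y)
  have hA1 : B1 = (fun p : ℤ × ℤ => (p.1 + 3 * p.2, p.1 - p.2)) '' A := by
    ext ⟨u, v⟩
    simp only [hB1, hB, hA, Set.mem_setOf_eq, Set.mem_image, Prod.mk.injEq, Prod.exists]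
    constructor
    · rintro ⟨⟨heq, ⟨a, ha⟩, ⟨b, hb⟩⟩, ⟨k, hk⟩⟩
      have hu : u = 4 * k + v := by omega
      have heqm : (k + v) ^ 2 + 3 * k ^ 2 = m := by
        have h4 : 4 * ((k + v) ^ 2 + 3 * k ^ 2) = 4 * m := by subst hu; linear_combination heq
        omega
      obtain ⟨hev, hod⟩ := parity_of _ _ m hm4 heqm
      exact ⟨k + v, k, ⟨heqm, hev, hod⟩, by omega, by omega⟩
    · rintro ⟨x, y, ⟨heq, ⟨a, ha⟩, ⟨b, hb⟩⟩, rfl, rfl⟩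
      refine ⟨⟨by linear_combination 4 * heq, ⟨a + 3 * b + 1, by omega⟩, ⟨a - b - 1, by omega⟩⟩, y, by ring⟩
  have hAcard : A.ncard = B1.ncard := by
    rw [hA1, Set.ncard_image_of_injective]
    intro p q hpq
    simp only [Prod.mk.injEq] at hpq
    exact Prod.ext (by omega) (by omega)
  omega
end

section
/- Let m be a positive integer with m ≡ 4 (mod 8). Then twice the number of integer pairs (x,y) with x² + 3y² = m and both x and y even equals the number of integer pairs (x,y) with x² + 3y² = m and both x and y odd. -/
theorem stmt_9 (m : ℤ) (hm : 0 < m) (h4 : m ≡ 4 [ZMOD 8]) :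
    2 * {p : ℤ × ℤ | p.1 ^ 2 + 3 * p.2 ^ 2 = m ∧ Even p.1 ∧ Even p.2}.ncard =
      {p : ℤ × ℤ | p.1 ^ 2 + 3 * p.2 ^ 2 = m ∧ Odd p.1 ∧ Odd p.2}.ncard := by
  have h8 : m % 8 = 4 := by
    have h := h4
    rw [Int.ModEq] at h
    omega
  set E := {p : ℤ × ℤ | p.1 ^ 2 + 3 * p.2 ^ 2 = m ∧ Even p.1 ∧ Even p.2} with hE
  set O := {p : ℤ × ℤ | p.1 ^ 2 + 3 * p.2 ^ 2 = m ∧ Odd p.1 ∧ Odd p.2} with hO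
  set f1 : ℤ × ℤ → ℤ × ℤ := fun p => ((p.1 + 3 * p.2) / 2, (p.1 - p.2) / 2) with hf1
  set f2 : ℤ × ℤ → ℤ × ℤ := fun p => ((p.1 + 3 * p.2) / 2, (p.2 - p.1) / 2) with hf2
  -- parity helper: if 4a²+12b² = m with m ≡ 4 mod 8 then a+b is odd
  have hpar : ∀ a b : ℤ, 4 * a ^ 2 + 12 * b ^ 2 = m → (a + b) % 2 = 1 := by
    intro a b hab
    rcases Int.even_or_odd a with ⟨s, hs⟩ | ⟨s, hs⟩ <;>
      rcases Int.even_or_odd b with ⟨t, ht⟩ | ⟨t, ht⟩ <;> subst hs <;> subst ht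
    · exfalso
      obtain ⟨A, B, hAB⟩ : ∃ A B : ℤ, m = 16 * A + 48 * B :=
        ⟨s ^ 2, t ^ 2, by linear_combination -hab⟩
      omega
    · omega
    · omega
    · exfalso
      obtain ⟨A, B, hAB⟩ : ∃ A B : ℤ, m = 16 * A + 48 * B + 16 :=
        ⟨s ^ 2 + s, t ^ 2 + t, by linear_combination -hab⟩
      omega
  have hmemE : ∀ p : ℤ × ℤ, p ∈ E →
      ∃ a b : ℤ, p.1 = 2 * a ∧ p.2 = 2 * b ∧ 4 * a ^ 2 + 12 * b ^ 2 = m ∧ (a + b) % 2 = 1 := by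
    rintro ⟨x, y⟩ hp
    obtain ⟨heq, ⟨a, ha⟩, ⟨b, hb⟩⟩ := hp
    simp only at ha hb heq
    have h1 : x = 2 * a := by omega
    have h2 : y = 2 * b := by omega
    subst h1; subst h2
    have heq' : 4 * a ^ 2 + 12 * b ^ 2 = m := by linear_combination heq
    exact ⟨a, b, rfl, rfl, heq', hpar a b heq'⟩
  have himg : O = f1 '' E ∪ f2 '' E := by
    ext z
    constructor
    · rintro ⟨heq, ⟨s, hu⟩, ⟨t, hv⟩⟩
      obtain ⟨u, v⟩ := z
      simp only at hu hv heq
      subst hu; subst hv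
      rcases Int.even_or_odd (s + t) with hst | hst
      · rw [Int.even_iff] at hst
        left
        refine ⟨(s + 3 * t + 2, s - t), ⟨?_, ?_, ?_⟩, ?_⟩
        · show (s + 3 * t + 2) ^ 2 + 3 * (s - t) ^ 2 = m
          linear_combination heq
        · show Even (s + 3 * t + 2)
          rw [Int.even_iff]; omega
        · show Even (s - t)
          rw [Int.even_iff]; omega
        · show ((s + 3 * t + 2 + 3 * (s - t)) / 2, (s + 3 * t + 2 - (s - t)) / 2)
            = (2 * s + 1, 2 * t + 1)
          rw [Prod.ext_iff]
          constructor <;> simp <;> omega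
      · rw [Int.odd_iff] at hst
        right
        refine ⟨(s - 3 * t - 1, s + t + 1), ⟨?_, ?_, ?_⟩, ?_⟩
        · show (s - 3 * t - 1) ^ 2 + 3 * (s + t + 1) ^ 2 = m
          linear_combination heq
        · show Even (s - 3 * t - 1)
          rw [Int.even_iff]; omega
        · show Even (s + t + 1)
          rw [Int.even_iff]; omega
        · show ((s - 3 * t - 1 + 3 * (s + t + 1)) / 2, (s + t + 1 - (s - 3 * t - 1)) / 2)
            = (2 * s + 1, 2 * t + 1)
          rw [Prod.ext_iff]
          constructor <;> simp <;> omega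
    · rintro (⟨⟨x, y⟩, hxy, rfl⟩ | ⟨⟨x, y⟩, hxy, rfl⟩) <;>
        obtain ⟨a, b, hx, hy, habm, hab⟩ := hmemE _ hxy
      · have hval : f1 (x, y) = (a + 3 * b, a - b) := by
          rw [hf1, Prod.ext_iff]
          constructor <;> simp <;> omega
        rw [hval]
        refine ⟨?_, ?_, ?_⟩
        · show (a + 3 * b) ^ 2 + 3 * (a - b) ^ 2 = m
          linear_combination habm
        · show Odd (a + 3 * b)
          rw [Int.odd_iff]; omega
        · show Odd (a - b)
          rw [Int.odd_iff]; omega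
      · have hval : f2 (x, y) = (a + 3 * b, b - a) := by
          rw [hf2, Prod.ext_iff]
          constructor <;> simp <;> omega
        rw [hval]
        refine ⟨?_, ?_, ?_⟩
        · show (a + 3 * b) ^ 2 + 3 * (b - a) ^ 2 = m
          linear_combination habm
        · show Odd (a + 3 * b)
          rw [Int.odd_iff]; omega
        · show Odd (b - a)
          rw [Int.odd_iff]; omega
  have hinj1 : Set.InjOn f1 E := by
    rintro ⟨x, y⟩ hx ⟨x', y'⟩ hx' h
    obtain ⟨a, b, ha1, ha2, -, -⟩ := hmemE _ hx
    obtain ⟨a', b', hb1, hb2, -, -⟩ := hmemE _ hx'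
    rw [hf1, Prod.ext_iff] at h
    simp only at h ha1 ha2 hb1 hb2
    rw [Prod.ext_iff]
    simp only
    omega
  have hinj2 : Set.InjOn f2 E := by
    rintro ⟨x, y⟩ hx ⟨x', y'⟩ hx' h
    obtain ⟨a, b, ha1, ha2, -, -⟩ := hmemE _ hx
    obtain ⟨a', b', hb1, hb2, -, -⟩ := hmemE _ hx'
    rw [hf2, Prod.ext_iff] at h
    simp only at h ha1 ha2 hb1 hb2
    rw [Prod.ext_iff]
    simp only
    omega
  have hdisj : Disjoint (f1 '' E) (f2 '' E) := by
    rw [Set.disjoint_left]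
    rintro z ⟨⟨x, y⟩, hxy, rfl⟩ ⟨⟨x', y'⟩, hxy', h⟩
    obtain ⟨a, b, ha1, ha2, -, hab⟩ := hmemE _ hxy
    obtain ⟨a', b', hb1, hb2, -, hab'⟩ := hmemE _ hxy'
    rw [hf1, hf2, Prod.ext_iff] at h
    simp only at h ha1 ha2 hb1 hb2
    omega
  have hEfin : E.Finite := by
    apply Set.Finite.subset ((Set.finite_Icc (-m) m).prod (Set.finite_Icc (-m) m))
    rintro ⟨x, y⟩ ⟨heq, -, -⟩
    simp only at heq
    simp only [Set.mem_prod, Set.mem_Icc]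
    refine ⟨⟨?_, ?_⟩, ?_, ?_⟩ <;>
      nlinarith [sq_nonneg x, sq_nonneg y, sq_nonneg (x - m), sq_nonneg (x + m),
        sq_nonneg (y - m), sq_nonneg (y + m)]
  have key : O.ncard = (f1 '' E).ncard + (f2 '' E).ncard := by
    rw [himg, Set.ncard_union_eq hdisj (hEfin.image _) (hEfin.image _)]
  rw [key, Set.ncard_image_of_injOn hinj1, Set.ncard_image_of_injOn hinj2]
  ring
end

section
/- Let a, b be positive odd integers with a < b, gcd(a,b) = 1 and a + b ≡ 0 (mod 8). If for every positive integer m divisible by 8 the number of integer pairs (x,y) with a·x² + b·y² = m and both x, y odd equals the number of integer pairs (x,y) with a·x² + b·y² = 4m and both x, y odd, then (a,b) ∈ {(3,5), (1,7), (1,15)}. -/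
/-!
Write `S(m)` (`oddReps a b m`) for the set of odd solutions of `a x² + b y² = m`. Below `a + 9b`
every odd solution has `y = ±1`, so if `m = a u² + b` with `u` odd and `4m < a + 9b`, then
`S(m) = {(±u, ±1)}` has four elements and the hypothesis forces an odd `x` with `a x² + b = 4m`.

With `m = a + b` this gives an odd `s` with `(s² - 4) a = 3b`. If `b ≤ 7a` then `s² ∈ {9, 25}`;
if `b > 7a`, then `m = 9a + b` gives an odd `x` with `x² = s² + 32`, which forces `s² = 49`.
Coprimality of `a` and `b` turns `s² = 9, 25, 49` into `(a, b) = (3, 5), (1, 7), (1, 15)`.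
-/

def oddReps (a b m : ℤ) : Set (ℤ × ℤ) :=
  {p | a * p.1 ^ 2 + b * p.2 ^ 2 = m ∧ Odd p.1 ∧ Odd p.2}

lemma Int.sq_eq_of_odd_of_sq_lt_49 {s : ℤ} (hs : Odd s) (h : s ^ 2 < 49) :
    s ^ 2 = 1 ∨ s ^ 2 = 9 ∨ s ^ 2 = 25 := by
  obtain ⟨hlo, hhi⟩ := abs_lt_of_sq_lt_sq' (b := (7 : ℤ)) (by linarith) (by norm_num)
  obtain ⟨k, rfl⟩ := hs
  have : k = 0 ∨ k = -1 ∨ k = 1 ∨ k = -2 ∨ k = 2 ∨ k = -3 := by omega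
  rcases this with rfl | rfl | rfl | rfl | rfl | rfl <;> norm_num

lemma Int.sq_eq_49_of_odd_of_sq_eq_add_32 {x s : ℤ} (hx : Odd x) (hs : Odd s)
    (h : x ^ 2 = s ^ 2 + 32) : s ^ 2 = 49 := by
  suffices key :
      ∀ X S : ℤ, 0 ≤ X → 0 ≤ S → Odd X → Odd S → X ^ 2 = S ^ 2 + 32 → S = 7 by
    rw [← sq_abs, key |x| |s| (abs_nonneg x) (abs_nonneg s) (odd_abs.2 hx) (odd_abs.2 hs)
      (by simpa only [sq_abs] using h)]
    norm_num
  rintro X S hX hS ⟨i, rfl⟩ ⟨j, rfl⟩ h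
  have hj0 : 0 ≤ j := by omega
  have hlt : j < i := by nlinarith
  have hj : j ≤ 3 := by nlinarith
  have hi : i ≤ 4 := by nlinarith
  interval_cases j <;> interval_cases i <;> omega

lemma ncard_signs_eq_four {u : ℤ} (hu : u ≠ 0) :
    ({(u, 1), (u, -1), (-u, 1), (-u, -1)} : Set (ℤ × ℤ)).ncard = 4 := by
  rw [Set.ncard_insert_of_notMem, Set.ncard_insert_of_notMem, Set.ncard_insert_of_notMem,
    Set.ncard_singleton] <;> simp [Prod.ext_iff] <;> omega

section OddReps

variable {a b m : ℤ}

lemma sq_snd_eq_one_of_mem_oddReps (ha : 0 < a) (hb : 0 ≤ b) (hm : m < a + 9 * b)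
    {p : ℤ × ℤ} (hp : p ∈ oddReps a b m) : p.2 ^ 2 = 1 := by
  obtain ⟨heq, hx, hy⟩ := hp
  have hx1 : 1 ≤ p.1 ^ 2 :=
    (one_le_sq_iff_one_le_abs _).2 (Int.one_le_abs (by rintro h0; simp [h0] at hx))
  have hy9 : p.2 ^ 2 < 9 := by nlinarith
  rcases Int.sq_eq_of_odd_of_sq_lt_49 hy (by linarith) with h | h | h <;> first | exact h | omega

lemma oddReps_eq_signs (ha : 0 < a) (hb : 0 ≤ b) (hm : m < a + 9 * b) {u : ℤ} (hu : Odd u)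
    (hmu : a * u ^ 2 + b = m) :
    oddReps a b m = {(u, 1), (u, -1), (-u, 1), (-u, -1)} := by
  ext p
  constructor
  · intro hp
    have hy := sq_snd_eq_one_of_mem_oddReps ha hb hm hp
    have hx : p.1 ^ 2 = u ^ 2 := by
      have := hp.1
      rw [hy] at this
      exact mul_left_cancel₀ ha.ne' (by linarith)
    obtain ⟨x, y⟩ := p
    rcases sq_eq_sq_iff_eq_or_eq_neg.1 hx with rfl | rfl <;>
      rcases sq_eq_one_iff.1 hy with rfl | rfl <;> simp
  · rintro (rfl | rfl | rfl | rfl) <;>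
      exact ⟨by simpa using hmu, by simpa using hu, by simp⟩

lemma exists_odd_of_ncard_oddReps_eq (ha : 0 < a) (hb : 0 ≤ b) {u : ℤ} (hu : Odd u)
    (hmu : a * u ^ 2 + b = m) (h4m : 4 * m < a + 9 * b)
    (hcard : (oddReps a b m).ncard = (oddReps a b (4 * m)).ncard) :
    ∃ x, Odd x ∧ a * x ^ 2 + b = 4 * m := by
  have hm : 0 ≤ m := hmu ▸ by positivity
  rw [oddReps_eq_signs ha hb (by linarith) hu hmu,
    ncard_signs_eq_four (by rintro rfl; simp at hu)] at hcard
  obtain ⟨p, hp⟩ := Set.nonempty_of_ncard_ne_zero (hcard ▸ four_ne_zero)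
  have hy := sq_snd_eq_one_of_mem_oddReps ha hb h4m hp
  exact ⟨p.1, hp.2.1, by simpa [hy] using hp.1⟩

end OddReps

lemma Int.eq_and_eq_of_mul_eq_mul_of_isCoprime {a b p q : ℤ} (hab : IsCoprime a b)
    (hpq : IsCoprime p q) (ha : 0 < a) (hq : 0 < q) (h : p * a = q * b) : a = q ∧ b = p := by
  have haq : a ∣ q := hab.dvd_of_dvd_mul_right ⟨p, by rw [← h, mul_comm]⟩
  have hqa : q ∣ a := hpq.symm.dvd_of_dvd_mul_left ⟨b, h⟩
  obtain rfl := Int.dvd_antisymm ha.le hq.le haq hqa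
  exact ⟨rfl, (mul_left_cancel₀ ha.ne' (by linarith)).symm⟩

theorem stmt_10_general (a b : ℤ) (ha : 0 < a)
    (hab : a < b) (hgcd : Int.gcd a b = 1)
    (h8 : a + b ≡ 0 [ZMOD 8])
    (h : ∀ m : ℤ, 0 < m → 8 ∣ m →
      {p : ℤ × ℤ | a * p.1 ^ 2 + b * p.2 ^ 2 = m ∧ Odd p.1 ∧ Odd p.2}.ncard =
      {p : ℤ × ℤ | a * p.1 ^ 2 + b * p.2 ^ 2 = 4 * m ∧ Odd p.1 ∧ Odd p.2}.ncard) :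
    (a, b) = (3, 5) ∨ (a, b) = (1, 7) ∨ (a, b) = (1, 15) := by
  have hb : 0 < b := ha.trans hab
  have hdvd : 8 ∣ a + b := Int.modEq_zero_iff_dvd.1 h8
  obtain ⟨s, hs, hs_eq⟩ := exists_odd_of_ncard_oddReps_eq ha (by linarith) (u := 1) odd_one
    (by ring) (by linarith) (h (a + b) (by linarith) hdvd)
  have hs2 : s ^ 2 = 9 ∨ s ^ 2 = 25 ∨ s ^ 2 = 49 := by
    rcases le_or_gt b (7 * a) with hle | hlt
    · have h7 : 7 < s ^ 2 := by nlinarith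
      rcases Int.sq_eq_of_odd_of_sq_lt_49 hs (by nlinarith) with h1 | h9 | h25
      exacts [by omega, .inl h9, .inr (.inl h25)]
    · obtain ⟨x, hx, hx_eq⟩ := exists_odd_of_ncard_oddReps_eq ha (by linarith) (u := 3)
        (by decide) rfl (by linarith) (h (a * 3 ^ 2 + b) (by positivity) (by omega))
      have : x ^ 2 = s ^ 2 + 32 := mul_left_cancel₀ ha.ne' (by linarith)
      exact .inr (.inr (Int.sq_eq_49_of_odd_of_sq_eq_add_32 hx hs this))
  have hco : IsCoprime a b := Int.isCoprime_iff_gcd_eq_one.2 hgcd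
  rcases hs2 with h9 | h25 | h49
  · obtain ⟨rfl, rfl⟩ := Int.eq_and_eq_of_mul_eq_mul_of_isCoprime (p := 5) (q := 3) hco
      (Int.isCoprime_iff_gcd_eq_one.2 rfl) ha (by norm_num) (by rw [h9] at hs_eq; linarith)
    exact .inl rfl
  · obtain ⟨rfl, rfl⟩ := Int.eq_and_eq_of_mul_eq_mul_of_isCoprime (p := 7) (q := 1) hco
      isCoprime_one_right ha one_pos (by rw [h25] at hs_eq; linarith)
    exact .inr (.inl rfl)
  · obtain ⟨rfl, rfl⟩ := Int.eq_and_eq_of_mul_eq_mul_of_isCoprime (p := 15) (q := 1) hco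
      isCoprime_one_right ha one_pos (by rw [h49] at hs_eq; linarith)
    exact .inr (.inr rfl)

theorem stmt_10 (a b : ℤ) (ha : 0 < a) (hb : 0 < b)
    (hao : Odd a) (hbo : Odd b) (hab : a < b) (hgcd : Int.gcd a b = 1)
    (h8 : a + b ≡ 0 [ZMOD 8])
    (h : ∀ m : ℤ, 0 < m → 8 ∣ m →
      {p : ℤ × ℤ | a * p.1 ^ 2 + b * p.2 ^ 2 = m ∧ Odd p.1 ∧ Odd p.2}.ncard =
      {p : ℤ × ℤ | a * p.1 ^ 2 + b * p.2 ^ 2 = 4 * m ∧ Odd p.1 ∧ Odd p.2}.ncard) :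
    (a, b) = (3, 5) ∨ (a, b) = (1, 7) ∨ (a, b) = (1, 15) :=
  stmt_10_general a b ha hab hgcd h8 h
end

section
/- For a positive integer n, the Diophantine equation x(x−1)/2 + y(y−1)/2 + 6·z(z−1)/2 = n has an integer solution (x,y,z) ∈ ℤ³ if and only if there is no positive integer r such that n ≡ 2·3^{2r−1} − 1 (mod 3^{2r}). -/
/-!
With `u = x + y - 1`, `v = x - y`, `c = 2z - 1` the equation becomes
`4(n + 1) = u² + v² + 3c²` with `c` odd, and in a primitive representation of `4m` by
`u² + v² + 3c²` the coordinate `c` is automatically odd. The excluded residue classes are the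
`n + 1 = 3^(2r+1) (3t + 2)`. Replacing `m` by `9m` changes nothing, and `m ≡ 6 (mod 9)` is
ruled out modulo 3. For the remaining `m`, Dirichlet's theorem supplies a
prime `p ≡ 5 (mod 8)` and `k ∈ {1, 3}` with `4m D = k²p + 3` and, by quadratic reciprocity,
`-D` a square modulo `p`. This produces a positive definite ternary form of determinant 3 with
corner entry `4m` that represents `p`. By Hermite reduction every such form is properly
equivalent to `x² + y² + 3z²` or to `x² + 2y² + 2yz + 2z²`; the latter never takes values
`≡ 5 (mod 8)`, so `4m` is primitively represented by `x² + y² + 3z²`.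
-/

open Matrix

/-! ## Proper equivalence of integral quadratic forms -/

namespace Matrix

variable {n R : Type*} [Fintype n] [CommRing R]

theorem dotProduct_transpose_mul_mul_mulVec (A T : Matrix n n R) (v : n → R) :
    v ⬝ᵥ (Tᵀ * A * T) *ᵥ v = (T *ᵥ v) ⬝ᵥ A *ᵥ (T *ᵥ v) := by
  rw [← mulVec_mulVec, ← mulVec_mulVec, dotProduct_mulVec, vecMul_transpose]

variable [DecidableEq n]

def ProperlyEquivalent (A B : Matrix n n ℤ) : Prop :=
  ∃ T : SpecialLinearGroup n ℤ, (T : Matrix n n ℤ)ᵀ * A * T = B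

theorem SpecialLinearGroup.mul_coe_inv (T : SpecialLinearGroup n R) :
    (T : Matrix n n R) * ((T⁻¹ : SpecialLinearGroup n R) : Matrix n n R) = 1 := by
  simp [SpecialLinearGroup.coe_inv, mul_adjugate]

theorem SpecialLinearGroup.coe_inv_mul (T : SpecialLinearGroup n R) :
    ((T⁻¹ : SpecialLinearGroup n R) : Matrix n n R) * (T : Matrix n n R) = 1 := by
  simp [SpecialLinearGroup.coe_inv, adjugate_mul]

theorem SpecialLinearGroup.mulVec_injective (T : SpecialLinearGroup n R) :
    Function.Injective (T : Matrix n n R).mulVec :=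
  mulVec_injective_of_isUnit ((isUnit_iff_isUnit_det _).2 (by simp))

namespace ProperlyEquivalent

variable {A B C : Matrix n n ℤ}

theorem trans (hAB : A.ProperlyEquivalent B) (hBC : B.ProperlyEquivalent C) :
    A.ProperlyEquivalent C := by
  obtain ⟨S, rfl⟩ := hAB
  obtain ⟨T, rfl⟩ := hBC
  exact ⟨S * T, by simp [transpose_mul, Matrix.mul_assoc]⟩

theorem symm (h : A.ProperlyEquivalent B) : B.ProperlyEquivalent A := by
  obtain ⟨T, rfl⟩ := h
  refine ⟨T⁻¹, ?_⟩
  rw [← Matrix.mul_assoc, ← Matrix.mul_assoc, ← transpose_mul, Matrix.mul_assoc,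
    SpecialLinearGroup.mul_coe_inv]
  simp

theorem det_eq (h : A.ProperlyEquivalent B) : B.det = A.det := by
  obtain ⟨T, rfl⟩ := h
  simp [det_mul]

theorem posDef (h : A.ProperlyEquivalent B) (hA : A.PosDef) : B.PosDef := by
  obtain ⟨T, rfl⟩ := h
  have h := hA.conjTranspose_mul_mul_same (B := (T : Matrix n n ℤ))
    (SpecialLinearGroup.mulVec_injective T)
  rwa [conjTranspose_eq_transpose_of_trivial] at h

theorem exists_dotProduct_mulVec_eq (h : A.ProperlyEquivalent B) {v : n → ℤ} (hv : v ≠ 0) :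
    ∃ w ≠ 0, w ⬝ᵥ A *ᵥ w = v ⬝ᵥ B *ᵥ v := by
  obtain ⟨T, rfl⟩ := h
  refine ⟨(T : Matrix n n ℤ) *ᵥ v, fun h0 => hv ?_,
    (dotProduct_transpose_mul_mul_mulVec A T v).symm⟩
  exact SpecialLinearGroup.mulVec_injective T (by rw [h0, mulVec_zero])

end ProperlyEquivalent

end Matrix

section Primitive

variable {n : Type*} [Fintype n]

def IsPrimitiveVec (v : n → ℤ) : Prop :=
  ∀ g : ℤ, (∀ i, g ∣ v i) → IsUnit g

theorem isPrimitiveVec_mulVec_single [DecidableEq n] (T : SpecialLinearGroup n ℤ) (j : n) :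
    IsPrimitiveVec ((T : Matrix n n ℤ) *ᵥ Pi.single j 1) := by
  intro g hg
  have h : g ∣ (((T⁻¹ : SpecialLinearGroup n ℤ) : Matrix n n ℤ) *ᵥ
      ((T : Matrix n n ℤ) *ᵥ Pi.single j 1)) j :=
    Finset.dvd_sum fun k _ => dvd_mul_of_dvd_right (hg k) _
  rw [mulVec_mulVec, SpecialLinearGroup.coe_inv_mul, one_mulVec, Pi.single_eq_same] at h
  exact isUnit_of_dvd_one h

theorem Matrix.ProperlyEquivalent.exists_isPrimitiveVec_dotProduct_mulVec_eq [DecidableEq n]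
    {A B : Matrix n n ℤ} (h : A.ProperlyEquivalent B) (i : n) :
    ∃ v, IsPrimitiveVec v ∧ v ⬝ᵥ A *ᵥ v = B i i := by
  obtain ⟨T, rfl⟩ := h
  refine ⟨_, isPrimitiveVec_mulVec_single T i, ?_⟩
  rw [← dotProduct_transpose_mul_mul_mulVec]
  simp

namespace Matrix.PosDef

variable {A : Matrix n n ℤ}

theorem exists_forall_dotProduct_mulVec_le [Nonempty n] (hA : A.PosDef) :
    ∃ v ≠ 0, ∀ w ≠ 0, v ⬝ᵥ A *ᵥ v ≤ w ⬝ᵥ A *ᵥ w := by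
  classical
  let f : {w : n → ℤ // w ≠ 0} → ℕ := fun w => (w.1 ⬝ᵥ A *ᵥ w.1).toNat
  have : Nonempty {w : n → ℤ // w ≠ 0} :=
    ⟨⟨Pi.single (Classical.arbitrary n) 1, by simp⟩⟩
  obtain ⟨⟨v, hv⟩, hvmin⟩ : ∃ v, ∀ w, f v ≤ f w :=
    ⟨_, fun w => Function.argmin_le f w⟩
  refine ⟨v, hv, fun w hw => ?_⟩
  have hle := hvmin ⟨w, hw⟩
  have hpos := hA.dotProduct_mulVec_pos hw
  have hpos' := hA.dotProduct_mulVec_pos hv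
  simp only [star_trivial, f] at hle hpos hpos'
  omega

theorem isPrimitiveVec_of_forall_le (hA : A.PosDef) {v : n → ℤ} (hv : v ≠ 0)
    (hmin : ∀ w ≠ 0, v ⬝ᵥ A *ᵥ v ≤ w ⬝ᵥ A *ᵥ w) : IsPrimitiveVec v := by
  intro g hg
  choose w hw using hg
  have hvw : v = g • w := funext hw
  have hw0 : w ≠ 0 := by rintro rfl; exact hv (by simpa using hvw)
  have hg0 : g ≠ 0 := by rintro rfl; exact hv (by simpa using hvw)
  have hval : v ⬝ᵥ A *ᵥ v = g ^ 2 * (w ⬝ᵥ A *ᵥ w) := by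
    rw [hvw, mulVec_smul, dotProduct_smul, smul_dotProduct, smul_eq_mul, smul_eq_mul]
    ring
  have hpos := hA.dotProduct_mulVec_pos hw0
  rw [star_trivial] at hpos
  have hg1 : g ^ 2 ≤ 1 := le_of_mul_le_mul_right (by linarith [hmin w hw0]) hpos
  have : -1 ≤ g ∧ g ≤ 1 := ⟨by nlinarith, by nlinarith⟩
  rw [Int.isUnit_iff]
  omega

theorem exists_properlyEquivalent_forall_corner_le [DecidableEq n] (hA : A.PosDef) (i : n)
    (hcompl : ∀ v, IsPrimitiveVec v →
      ∃ T : SpecialLinearGroup n ℤ, (T : Matrix n n ℤ) *ᵥ Pi.single i 1 = v) :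
    ∃ B, A.ProperlyEquivalent B ∧ 0 < B i i ∧ ∀ w ≠ 0, B i i ≤ w ⬝ᵥ B *ᵥ w := by
  have : Nonempty n := ⟨i⟩
  obtain ⟨v, hv, hmin⟩ := hA.exists_forall_dotProduct_mulVec_le
  obtain ⟨T, hT⟩ := hcompl v (hA.isPrimitiveVec_of_forall_le hv hmin)
  have hAB : A.ProperlyEquivalent ((T : Matrix n n ℤ)ᵀ * A * T) := ⟨T, rfl⟩
  have hcorner : ((T : Matrix n n ℤ)ᵀ * A * T) i i = v ⬝ᵥ A *ᵥ v := by
    rw [← hT, ← dotProduct_transpose_mul_mul_mulVec]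
    simp
  refine ⟨_, hAB, ?_, fun w hw => ?_⟩
  · rw [hcorner]
    simpa using hA.dotProduct_mulVec_pos hv
  · obtain ⟨u, hu, hval⟩ := hAB.exists_dotProduct_mulVec_eq hw
    rw [hcorner, ← hval]
    exact hmin u hu

end Matrix.PosDef

end Primitive

theorem exists_two_mul_abs_add_mul_le (s : ℤ) {a : ℤ} (ha : 0 < a) :
    ∃ q, 2 * |s + a * q| ≤ a := by
  lift a to ℕ using ha.le
  refine ⟨-s.bdiv a, ?_⟩
  have hlow := Int.le_bmod (x := s) (m := a) (by omega)
  have hup := Int.bmod_lt (x := s) (m := a) (by omega)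
  have heq : s + a * -s.bdiv a = s.bmod a := by linarith [Int.bmod_add_bdiv s a]
  rw [heq]
  rcases abs_cases (s.bmod a) with ⟨h, -⟩ | ⟨h, -⟩ <;> omega

/-! ## Binary forms -/

theorem IsPrimitiveVec.isCoprime_fin_two {v : Fin 2 → ℤ} (hv : IsPrimitiveVec v) :
    IsCoprime (v 0) (v 1) := by
  rw [Int.isCoprime_iff_gcd_eq_one]
  have := hv (Int.gcd (v 0) (v 1)) fun i => by
    fin_cases i
    exacts [Int.gcd_dvd_left .., Int.gcd_dvd_right ..]
  simpa [Int.ofNat_isUnit] using this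

theorem posDef_fin_two_of_pos_of_det_pos {a u b : ℤ} (ha : 0 < a) (hdet : 0 < a * b - u ^ 2) :
    (!![a, u; u, b]).PosDef := by
  refine PosDef.of_dotProduct_mulVec_pos ?_ fun v hv => ?_
  · ext i j; fin_cases i <;> fin_cases j <;> rfl
  have hval : a * (star v ⬝ᵥ !![a, u; u, b] *ᵥ v) =
      (a * v 0 + u * v 1) ^ 2 + (a * b - u ^ 2) * v 1 ^ 2 := by
    simp [dotProduct, mulVec, Fin.sum_univ_two]
    ring
  refine pos_of_mul_pos_right ?_ ha.le
  rw [hval]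
  rcases eq_or_ne (v 1) 0 with h1 | h1
  · have h0 : v 0 ≠ 0 := fun h0 => hv (by ext i; fin_cases i <;> simp [h0, h1])
    rw [h1]
    simpa using sq_pos_of_ne_zero (mul_ne_zero ha.ne' h0)
  · exact add_pos_of_nonneg_of_pos (sq_nonneg _) (mul_pos hdet (sq_pos_of_ne_zero h1))

theorem exists_properlyEquivalent_reduced_fin_two {C : Matrix (Fin 2) (Fin 2) ℤ}
    (hC : C.PosDef) :
    ∃ a u b : ℤ,
      C.ProperlyEquivalent !![a, u; u, b] ∧ 0 < a ∧ 2 * |u| ≤ a ∧ a ≤ b := by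
  obtain ⟨B, hCB, ha, hmin⟩ := hC.exists_properlyEquivalent_forall_corner_le 0 fun v hv => by
    obtain ⟨T, h0, h1⟩ := hv.isCoprime_fin_two.exists_SL2_col 0
    exact ⟨T, by ext i; fin_cases i <;> simp [h0, h1]⟩
  have hsymm : B 1 0 = B 0 1 := by simpa using (hCB.posDef hC).1.apply 0 1
  obtain ⟨q, hq⟩ := exists_two_mul_abs_add_mul_le (B 0 1) ha
  refine ⟨B 0 0, B 0 1 + B 0 0 * q, B 1 1 + 2 * B 0 1 * q + B 0 0 * q ^ 2,
    hCB.trans ⟨⟨!![1, q; 0, 1], by simp⟩, ?_⟩, ha, hq, ?_⟩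
  · rw [eta_fin_two B, hsymm]
    ext i j; fin_cases i <;> fin_cases j <;> simp [Matrix.mul_apply, Fin.sum_univ_two] <;> ring
  · have := hmin ![q, 1] (by simp)
    rw [eta_fin_two B, hsymm] at this
    simp [dotProduct, mulVec, Fin.sum_univ_two] at this
    nlinarith

theorem exists_three_mul_sq_le_four_mul_det_fin_two {C : Matrix (Fin 2) (Fin 2) ℤ}
    (hC : C.PosDef) : ∃ v ≠ 0, 3 * (v ⬝ᵥ C *ᵥ v) ^ 2 ≤ 4 * C.det := by
  obtain ⟨a, u, b, hCD, ha, hu, hab⟩ := exists_properlyEquivalent_reduced_fin_two hC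
  obtain ⟨v, hv, hval⟩ := hCD.exists_dotProduct_mulVec_eq (v := Pi.single 0 1) (by simp)
  refine ⟨v, hv, ?_⟩
  have hu2 : 4 * u ^ 2 ≤ a ^ 2 := by nlinarith [sq_abs u, abs_nonneg u]
  rw [← hCD.det_eq, hval, det_fin_two_of]
  simp only [mulVec_single_one, single_dotProduct, one_mul, col_apply, of_apply, cons_val',
    cons_val_zero, empty_val', cons_val_fin_one]
  nlinarith

theorem properlyEquivalent_of_det_eq_three_fin_two {C : Matrix (Fin 2) (Fin 2) ℤ}
    (hC : C.PosDef) (hdet : C.det = 3) :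
    C.ProperlyEquivalent !![1, 0; 0, 3] ∨ C.ProperlyEquivalent !![2, 1; 1, 2] := by
  obtain ⟨a, u, b, hCD, ha, hu, hab⟩ := exists_properlyEquivalent_reduced_fin_two hC
  rw [← hCD.det_eq, det_fin_two_of] at hdet
  have hu2 : 4 * u ^ 2 ≤ a ^ 2 := by nlinarith [sq_abs u, abs_nonneg u]
  have ha2 : a ≤ 2 := by nlinarith
  have hu' := abs_le.mp (show |2 * u| ≤ a by rwa [abs_mul, abs_two])
  obtain ⟨rfl, rfl⟩ | ⟨rfl, rfl⟩ | ⟨rfl, rfl⟩ | ⟨rfl, rfl⟩ :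
      (a = 1 ∧ u = 0) ∨ (a = 2 ∧ u = 1) ∨ (a = 2 ∧ u = -1) ∨ (a = 2 ∧ u = 0) := by
    omega
  · obtain rfl : b = 3 := by omega
    exact Or.inl hCD
  · obtain rfl : b = 2 := by omega
    exact Or.inr hCD
  · obtain rfl : b = 2 := by omega
    exact Or.inr (hCD.trans ⟨⟨!![0, 1; -1, 0], by decide⟩, by decide⟩)
  · omega

/-! ## Ternary forms of determinant 3 -/

theorem IsPrimitiveVec.exists_mulVec_single_eq_fin_three {v : Fin 3 → ℤ}
    (hv : IsPrimitiveVec v) :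
    ∃ T : SpecialLinearGroup (Fin 3) ℤ,
      (T : Matrix (Fin 3) (Fin 3) ℤ) *ᵥ Pi.single 0 1 = v := by
  set g : ℤ := (Int.gcd (v 0) (v 1) : ℤ) with hg
  obtain ⟨a, b, ⟨s, t, hst⟩, ha, hb⟩ :
      ∃ a b, IsCoprime a b ∧ v 0 = g * a ∧ v 1 = g * b := by
    rcases eq_or_ne g 0 with h | h
    · obtain ⟨h0, h1⟩ := Int.gcd_eq_zero_iff.mp (by simpa [hg] using h)
      exact ⟨1, 0, isCoprime_one_left, by simp [h0, h], by simp [h1, h]⟩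
    · obtain ⟨a, ha⟩ : g ∣ v 0 := Int.gcd_dvd_left ..
      obtain ⟨b, hb⟩ : g ∣ v 1 := Int.gcd_dvd_right ..
      refine ⟨a, b, ⟨Int.gcdA (v 0) (v 1), Int.gcdB (v 0) (v 1), mul_left_cancel₀ h ?_⟩,
        ha, hb⟩
      linear_combination (Int.gcd_eq_gcd_ab (v 0) (v 1)).symm - Int.gcdA (v 0) (v 1) * ha -
        Int.gcdB (v 0) (v 1) * hb
  obtain ⟨U, W, hUW⟩ : IsCoprime g (v 2) := by
    rw [Int.isCoprime_iff_gcd_eq_one]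
    have := hv (Int.gcd g (v 2)) fun i => by
      fin_cases i
      · exact (Int.gcd_dvd_left ..).trans (Int.gcd_dvd_left ..)
      · exact (Int.gcd_dvd_left ..).trans (Int.gcd_dvd_right ..)
      · exact Int.gcd_dvd_right ..
    simpa [Int.ofNat_isUnit] using this
  refine ⟨⟨!![v 0, -t, -W * a; v 1, s, -W * b; v 2, 0, U], ?_⟩, ?_⟩
  · simp [det_fin_three]
    linear_combination (U * g + W * v 2) * hst + hUW + s * U * ha + t * U * hb
  · ext i; fin_cases i <;> simp

/-- `G 0 0` times the Schur complement of the entry `G 0 0`. -/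
def scaledSchur (G : Matrix (Fin 3) (Fin 3) ℤ) : Matrix (Fin 2) (Fin 2) ℤ :=
  !![G 0 0 * G 1 1 - G 0 1 ^ 2, G 0 0 * G 1 2 - G 0 1 * G 0 2;
     G 0 0 * G 1 2 - G 0 1 * G 0 2, G 0 0 * G 2 2 - G 0 2 ^ 2]

section scaledSchur

variable {G : Matrix (Fin 3) (Fin 3) ℤ}

theorem isHermitian_scaledSchur (G : Matrix (Fin 3) (Fin 3) ℤ) : (scaledSchur G).IsHermitian := by
  ext i j; fin_cases i <;> fin_cases j <;> rfl

theorem mul_dotProduct_mulVec_eq_sq_add_scaledSchur (hG : G.IsHermitian) (v : Fin 3 → ℤ) :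
    G 0 0 * (v ⬝ᵥ G *ᵥ v) = (G 0 0 * v 0 + G 0 1 * v 1 + G 0 2 * v 2) ^ 2 +
      ![v 1, v 2] ⬝ᵥ scaledSchur G *ᵥ ![v 1, v 2] := by
  have h10 : G 1 0 = G 0 1 := by simpa using hG.apply 0 1
  have h20 : G 2 0 = G 0 2 := by simpa using hG.apply 0 2
  have h21 : G 2 1 = G 1 2 := by simpa using hG.apply 1 2
  simp [dotProduct, mulVec, Fin.sum_univ_three, Fin.sum_univ_two, scaledSchur, h10, h20, h21]
  ring

theorem det_scaledSchur (hG : G.IsHermitian) : (scaledSchur G).det = G 0 0 * G.det := by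
  have h10 : G 1 0 = G 0 1 := by simpa using hG.apply 0 1
  have h20 : G 2 0 = G 0 2 := by simpa using hG.apply 0 2
  have h21 : G 2 1 = G 1 2 := by simpa using hG.apply 1 2
  rw [scaledSchur, det_fin_two_of, det_fin_three, h10, h20, h21]
  ring

theorem posDef_of_posDef_scaledSchur (hG : G.IsHermitian) (h00 : 0 < G 0 0)
    (hS : (scaledSchur G).PosDef) : G.PosDef := by
  refine PosDef.of_dotProduct_mulVec_pos hG fun v hv => ?_
  rw [star_trivial]
  refine pos_of_mul_pos_right ?_ h00.le
  rw [mul_dotProduct_mulVec_eq_sq_add_scaledSchur hG]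
  by_cases h12 : ![v 1, v 2] = 0
  · have h1 : v 1 = 0 := by simpa using congrFun h12 0
    have h2 : v 2 = 0 := by simpa using congrFun h12 1
    have h0 : v 0 ≠ 0 := fun h0 => hv (by ext i; fin_cases i <;> simp [h0, h1, h2])
    rw [h12, h1, h2]
    simp only [zero_dotProduct, add_zero, mul_zero]
    positivity
  · have := hS.dotProduct_mulVec_pos h12
    rw [star_trivial] at this
    positivity

end scaledSchur

theorem exists_properlyEquivalent_corner_eq_one_of_det_eq_three
    {F : Matrix (Fin 3) (Fin 3) ℤ} (hF : F.PosDef) (hdet : F.det = 3) :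
    ∃ G, F.ProperlyEquivalent G ∧ G 0 0 = 1 := by
  obtain ⟨G, hFG, ha, hmin⟩ := hF.exists_properlyEquivalent_forall_corner_le 0
    fun _ hv => hv.exists_mulVec_single_eq_fin_three
  refine ⟨G, hFG, ?_⟩
  have hG := (hFG.posDef hF).1
  set a := G 0 0
  have hlow : ∀ w ≠ 0, 3 * a ^ 2 ≤ 4 * (w ⬝ᵥ scaledSchur G *ᵥ w) := by
    intro w hw
    obtain ⟨x, hx⟩ := exists_two_mul_abs_add_mul_le (G 0 1 * w 0 + G 0 2 * w 1) ha
    have hv : ![x, w 0, w 1] ≠ 0 := fun h => hw <| by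
      ext i; fin_cases i
      exacts [congrFun h 1, congrFun h 2]
    have hid := mul_dotProduct_mulVec_eq_sq_add_scaledSchur hG ![x, w 0, w 1]
    have hw' : ![(![x, w 0, w 1] : Fin 3 → ℤ) 1, ![x, w 0, w 1] 2] = w := by
      ext i; fin_cases i <;> rfl
    rw [hw'] at hid
    simp only [cons_val_zero, cons_val_one, cons_val_two, head_cons, tail_cons] at hid
    have hsq : 4 * (a * x + G 0 1 * w 0 + G 0 2 * w 1) ^ 2 ≤ a ^ 2 := by
      have := abs_le.mp (show |2 * (G 0 1 * w 0 + G 0 2 * w 1 + a * x)| ≤ a by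
        rwa [abs_mul, abs_two])
      nlinarith
    nlinarith [hmin _ hv]
  have hS : (scaledSchur G).PosDef :=
    PosDef.of_dotProduct_mulVec_pos (isHermitian_scaledSchur G) fun w hw => by
      rw [star_trivial]
      nlinarith [hlow w hw]
  obtain ⟨w, hw, hbound⟩ := exists_three_mul_sq_le_four_mul_det_fin_two hS
  rw [det_scaledSchur hG, hFG.det_eq, hdet] at hbound
  have hc := hlow w hw
  have h4 : 9 * a ^ 4 ≤ 64 * a := by nlinarith
  have h3 : a ^ 3 < 8 := by nlinarith
  nlinarith

def blockOne (S : Matrix (Fin 2) (Fin 2) ℤ) : Matrix (Fin 3) (Fin 3) ℤ :=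
  !![1, 0, 0; 0, S 0 0, S 0 1; 0, S 1 0, S 1 1]

theorem Matrix.ProperlyEquivalent.blockOne {S D : Matrix (Fin 2) (Fin 2) ℤ}
    (h : S.ProperlyEquivalent D) : (blockOne S).ProperlyEquivalent (blockOne D) := by
  obtain ⟨T, rfl⟩ := h
  refine ⟨⟨_root_.blockOne T, ?_⟩, ?_⟩
  · have hT := T.det_coe
    rw [det_fin_two] at hT
    simpa [_root_.blockOne, det_fin_three] using hT
  ext i j
  fin_cases i <;> fin_cases j <;>
    simp [_root_.blockOne, mul_apply, Fin.sum_univ_three, Fin.sum_univ_two]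

theorem properlyEquivalent_of_det_eq_three_fin_three {F : Matrix (Fin 3) (Fin 3) ℤ}
    (hF : F.PosDef) (hdet : F.det = 3) :
    F.ProperlyEquivalent !![1, 0, 0; 0, 1, 0; 0, 0, 3] ∨
      F.ProperlyEquivalent !![1, 0, 0; 0, 2, 1; 0, 1, 2] := by
  obtain ⟨G, hFG, hG1⟩ := exists_properlyEquivalent_corner_eq_one_of_det_eq_three hF hdet
  have hG := (hFG.posDef hF).1
  have h10 : G 1 0 = G 0 1 := by simpa using hG.apply 0 1
  have h20 : G 2 0 = G 0 2 := by simpa using hG.apply 0 2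
  have h21 : G 2 1 = G 1 2 := by simpa using hG.apply 1 2
  have hGS : G.ProperlyEquivalent (blockOne (scaledSchur G)) := by
    refine ⟨⟨!![1, -G 0 1, -G 0 2; 0, 1, 0; 0, 0, 1], by simp [det_fin_three]⟩, ?_⟩
    ext i j
    fin_cases i <;> fin_cases j <;>
      simp [blockOne, scaledSchur, mul_apply, Fin.sum_univ_three, hG1, h10, h20, h21] <;> ring
  have hFS := hFG.trans hGS
  have hS : (scaledSchur G).PosDef := by
    convert (hFS.posDef hF).submatrix (Fin.succ_injective 2) using 1
    ext i j; fin_cases i <;> fin_cases j <;> rfl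
  have hSdet : (scaledSchur G).det = 3 := by
    rw [det_scaledSchur hG, hG1, hFG.det_eq, hdet, one_mul]
  rcases properlyEquivalent_of_det_eq_three_fin_two hS hSdet with h | h
  · left
    convert hFS.trans h.blockOne using 1
    ext i j; fin_cases i <;> fin_cases j <;> rfl
  · right
    convert hFS.trans h.blockOne using 1
    ext i j; fin_cases i <;> fin_cases j <;> rfl

theorem dotProduct_mulVec_emod_eight_ne_five (v : Fin 3 → ℤ) :
    (v ⬝ᵥ !![1, 0, 0; 0, 2, 1; 0, 1, 2] *ᵥ v) % 8 ≠ 5 := by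
  have key : ∀ a b c : ZMod 8, a ^ 2 + 2 * b ^ 2 + 2 * c ^ 2 + 2 * b * c ≠ 5 := by decide
  intro h
  have h8 : ((v ⬝ᵥ !![1, 0, 0; 0, 2, 1; 0, 1, 2] *ᵥ v : ℤ) : ZMod 8) = 5 := by
    rw [← ZMod.intCast_mod, Nat.cast_ofNat, h]
    rfl
  simp [dotProduct, mulVec, Fin.sum_univ_three] at h8
  exact key (v 0) (v 1) (v 2) (by linear_combination h8)

theorem exists_isPrimitiveVec_of_det_eq_three {F : Matrix (Fin 3) (Fin 3) ℤ} (hF : F.PosDef)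
    (hdet : F.det = 3) (h5 : ∃ v, (v ⬝ᵥ F *ᵥ v) % 8 = 5) :
    ∃ v : Fin 3 → ℤ, IsPrimitiveVec v ∧ v 0 ^ 2 + v 1 ^ 2 + 3 * v 2 ^ 2 = F 0 0 := by
  rcases properlyEquivalent_of_det_eq_three_fin_three hF hdet with h | h
  · obtain ⟨v, hv, hval⟩ := h.symm.exists_isPrimitiveVec_dotProduct_mulVec_eq 0
    refine ⟨v, hv, ?_⟩
    rw [← hval]
    simp [dotProduct, mulVec, Fin.sum_univ_three]
    ring
  · obtain ⟨v, hv5⟩ := h5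
    have hv : v ≠ 0 := by rintro rfl; simp at hv5
    obtain ⟨w, -, hw⟩ := h.symm.exists_dotProduct_mulVec_eq hv
    exact absurd (hw ▸ hv5) (dotProduct_mulVec_emod_eight_ne_five w)

theorem posDef_and_det_eq_three {N k c x p D : ℤ} (hN : 0 < N) (hp : 0 < p)
    (hND : N * D = k ^ 2 * p + 3) (hpc : p * c = x ^ 2 + D) :
    (!![N, k, 0; k, c, -x; 0, -x, p]).PosDef ∧ (!![N, k, 0; k, c, -x; 0, -x, p]).det = 3 := by
  have hS : scaledSchur !![N, k, 0; k, c, -x; 0, -x, p] =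
      !![N * c - k ^ 2, -(N * x); -(N * x), N * p] := by
    ext i j; fin_cases i <;> fin_cases j <;> simp [scaledSchur]
  have hA : 0 < N * c - k ^ 2 := by
    have : p * (N * c - k ^ 2) = N * x ^ 2 + 3 := by linear_combination N * hpc + hND
    nlinarith [sq_nonneg x]
  refine ⟨posDef_of_posDef_scaledSchur ?_ hN ?_, ?_⟩
  · ext i j; fin_cases i <;> fin_cases j <;> simp
  · rw [hS]
    refine posDef_fin_two_of_pos_of_det_pos hA ?_
    have : (N * c - k ^ 2) * (N * p) - (-(N * x)) ^ 2 = 3 * N := by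
      linear_combination N * (N * hpc + hND)
    omega
  · simp [det_fin_three]
    linear_combination N * hpc + hND

/-! ## Jacobi symbols and the choice of the prime -/

section Jacobi

open NumberTheorySymbols ZMod

theorem jacobiSym_neg_three {d : ℕ} (hd : Odd d) : J(-3 | d) = J(d | 3) := by
  have hsplit : J(-3 | d) = J(-1 | d) * J(((3 : ℕ) : ℤ) | d) := by
    rw [← jacobiSym.mul_left]
    norm_num
  rw [hsplit, jacobiSym.at_neg_one hd, χ₄_eq_neg_one_pow (Nat.odd_iff.mp hd),
    jacobiSym.quadratic_reciprocity (by decide) hd, ← mul_assoc, ← pow_add,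
    show 3 / 2 * (d / 2) = d / 2 by omega, Even.neg_one_pow ⟨_, rfl⟩, one_mul]

theorem jacobiSym_eq_jacobiSym_three {p : ℕ} (hp : p % 8 = 5) {m : ℕ} (hm : m ≠ 0)
    (h : ∀ d, Odd d → d ∣ m → J(p | d) = J(-3 | d)) : J(m | p) = J(m | 3) := by
  obtain ⟨k, d, hd, rfl⟩ := Nat.exists_eq_two_pow_mul_odd hm
  have h2p : J(2 | p) = -1 := by
    rw [jacobiSym.at_two (Nat.odd_iff.mpr (by omega)), χ₈_nat_eq_if_mod_eight]
    simp [hp, show p % 2 = 1 by omega]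
  have h23 : J(2 | 3) = -1 := by norm_num
  push_cast
  rw [jacobiSym.mul_left, jacobiSym.mul_left, jacobiSym.pow_left, jacobiSym.pow_left, h2p, h23,
    jacobiSym.quadratic_reciprocity_one_mod_four' hd (by omega), h d hd (dvd_mul_left _ _),
    jacobiSym_neg_three hd]

theorem jacobiSym_neg_mul_jacobiSym {N D : ℤ} {k p : ℕ} (hND : N * D = k ^ 2 * p + 3) :
    J(-D | p) * J(N | p) = J(-3 | p) := by
  rw [← jacobiSym.mul_left]
  apply jacobiSym.mod_left'
  rw [show -D * N = -3 + p * (-k ^ 2) by linear_combination -hND, Int.add_mul_emod_self_left]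

theorem jacobiSym_four_mul {p : ℕ} (hp : Odd p) (a : ℤ) : J(4 * a | p) = J(a | p) := by
  obtain ⟨s, rfl⟩ := hp
  have h2 : Int.gcd 2 ↑(2 * s + 1) = 1 :=
    Int.isCoprime_iff_gcd_eq_one.mp ⟨-s, 1, by push_cast; ring⟩
  rw [jacobiSym.mul_left, show (4 : ℤ) = 2 ^ 2 by norm_num, jacobiSym.sq_one' h2, one_mul]

theorem exists_isPrimitiveVec_of_prime {m k p : ℕ} {D : ℤ} (hp : p.Prime) (hp8 : p % 8 = 5)
    (hm : 0 < m) (hND : 4 * m * D = k ^ 2 * p + 3) (hJ : J(-D | p) = 1) :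
    ∃ v : Fin 3 → ℤ, IsPrimitiveVec v ∧ v 0 ^ 2 + v 1 ^ 2 + 3 * v 2 ^ 2 = 4 * m := by
  have := Fact.mk hp
  obtain ⟨ξ, hξ⟩ := ZMod.isSquare_of_jacobiSym_eq_one hJ
  obtain ⟨c, hc⟩ : (p : ℤ) ∣ (ξ.val : ℤ) ^ 2 + D := by
    rw [← ZMod.intCast_zmod_eq_zero_iff_dvd]
    push_cast at hξ ⊢
    rw [ZMod.natCast_zmod_val]
    linear_combination -hξ
  obtain ⟨hF, hdet⟩ :=
    posDef_and_det_eq_three (by positivity) (by exact_mod_cast hp.pos) hND hc.symm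
  obtain ⟨v, hv, hval⟩ := exists_isPrimitiveVec_of_det_eq_three hF hdet
    ⟨![0, 0, 1], by simp [dotProduct, mulVec, Fin.sum_univ_three]; omega⟩
  exact ⟨v, hv, by simpa using hval⟩

theorem jacobiSym_eq_jacobiSym_neg_three_of_dvd_add_three {p d : ℕ} (h : (d : ℤ) ∣ p + 3) :
    J(p | d) = J(-3 | d) := by
  obtain ⟨e, he⟩ := h
  apply jacobiSym.mod_left'
  rw [show (p : ℤ) = -3 + d * e by linear_combination he, Int.add_mul_emod_self_left]

theorem jacobiSym_eq_jacobiSym_neg_three_of_dvd_three_mul_add_one {p d : ℕ}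
    (h : (d : ℤ) ∣ 3 * p + 1) : J(p | d) = J(-3 | d) := by
  obtain ⟨e, he⟩ := h
  have h3d : J(3 | d) ^ 2 = 1 := jacobiSym.sq_one <| Int.isCoprime_iff_gcd_eq_one.mp
    ⟨-p, e, by linear_combination -he⟩
  have h3p : J(3 | d) * J(p | d) = J(-1 | d) := by
    rw [← jacobiSym.mul_left]
    apply jacobiSym.mod_left'
    rw [show (3 * p : ℤ) = -1 + d * e by linear_combination he, Int.add_mul_emod_self_left]
  calc J(p | d) = J(3 | d) ^ 2 * J(p | d) := by rw [h3d, one_mul]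
    _ = J(3 | d) * J(-1 | d) := by rw [← h3p]; ring
    _ = J(-3 | d) := by rw [← jacobiSym.mul_left]; norm_num

theorem isCoprime_sixteen_mul_sub_three {m : ℤ} (h3 : ¬ 3 ∣ m) :
    IsCoprime (16 * m - 3) (24 * m) := by
  have h8 : IsCoprime (16 * m - 3) (8 * m) := by
    have : IsCoprime (-3 : ℤ) (8 * m) := by
      rw [IsCoprime.neg_left_iff, Prime.coprime_iff_not_dvd Int.prime_three]
      omega
    simpa [show -3 + 8 * m * 2 = 16 * m - 3 by ring] using this.add_mul_left_left 2
  have h3' : IsCoprime (16 * m - 3) 3 := by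
    have h := ((Prime.coprime_iff_not_dvd Int.prime_three).2
      (by omega : ¬ (3 : ℤ) ∣ 16 * m)).symm.add_mul_left_left (-1)
    rwa [show 16 * m + 3 * -1 = 16 * m - 3 by ring] at h
  rw [show 24 * m = 8 * m * 3 by ring]
  exact h8.mul_right h3'

theorem exists_isPrimitiveVec_of_not_three_dvd {m : ℕ} (hm : 0 < m) (h3 : ¬ 3 ∣ m) :
    ∃ v : Fin 3 → ℤ, IsPrimitiveVec v ∧ v 0 ^ 2 + v 1 ^ 2 + 3 * v 2 ^ 2 = 4 * m := by
  have h3' : ¬ (3 : ℤ) ∣ m := by exact_mod_cast h3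
  -- `16m - 3` is the residue modulo `24m` of `p ≡ -3 (mod 8m)`, `p ≡ m (mod 3)`
  obtain ⟨p, -, hp, hpmod⟩ := Nat.forall_exists_prime_gt_and_zmodEq 0 (q := 24 * m) (by omega)
    (by push_cast; exact isCoprime_sixteen_mul_sub_three h3')
  obtain ⟨t, ht⟩ := hpmod.symm.dvd
  push_cast at ht
  have hp8 : p % 8 = 5 := by
    have : (8 : ℤ) ∣ p + 3 := ⟨2 * m + 3 * m * t, by linear_combination ht⟩
    omega
  have hodd : Odd p := Nat.odd_iff.mpr (by omega)
  have hND : (4 * m : ℕ) * (4 + 6 * t) = 1 ^ 2 * p + 3 := by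
    push_cast
    linear_combination -ht
  refine exists_isPrimitiveVec_of_prime hp hp8 hm (by exact_mod_cast hND) ?_
  have hprod := jacobiSym_neg_mul_jacobiSym hND
  have hmp : J(m | p) = J(m | 3) := jacobiSym_eq_jacobiSym_three hp8 hm.ne' fun d _ hd =>
    jacobiSym_eq_jacobiSym_neg_three_of_dvd_add_three <|
      (Int.natCast_dvd_natCast.mpr hd).trans ⟨16 + 24 * t, by linear_combination ht⟩
  have h3p : J(-3 | p) = J(m | 3) := by
    rw [jacobiSym_neg_three hodd]
    apply jacobiSym.mod_left'
    push_cast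
    rw [show (p : ℤ) = m + 3 * (5 * m - 1 + 8 * m * t) by linear_combination ht,
      Int.add_mul_emod_self_left]
  have hm3 : J(m | 3) ≠ 0 := jacobiSym.ne_zero <|
    Int.isCoprime_iff_gcd_eq_one.mp ((Prime.coprime_iff_not_dvd Int.prime_three).2 h3').symm
  push_cast at hprod
  rw [jacobiSym_four_mul hodd, hmp, h3p] at hprod
  exact (mul_eq_right₀ hm3).mp hprod

theorem exists_isPrimitiveVec_of_mod_three_eq_one {m : ℕ} (hm : m % 3 = 1) :
    ∃ v : Fin 3 → ℤ, IsPrimitiveVec v ∧ v 0 ^ 2 + v 1 ^ 2 + 3 * v 2 ^ 2 = 4 * (3 * m) := by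
  obtain ⟨j, rfl⟩ : ∃ j, m = 3 * j + 1 := ⟨m / 3, by omega⟩
  -- `16j + 5 = (16m - 1) / 3`, so `p ≡ 16j + 5 (mod 8m)` gives `3p ≡ -1 (mod 8m)`
  have hcop : IsCoprime (16 * j + 5 : ℤ) ((8 * (3 * j + 1) : ℕ) : ℤ) :=
    ⟨-3, 2, by push_cast; ring⟩
  obtain ⟨p, -, hp, hpmod⟩ := Nat.forall_exists_prime_gt_and_zmodEq 0 (by omega) hcop
  obtain ⟨t, ht⟩ := hpmod.symm.dvd
  push_cast at ht
  have hp8 : p % 8 = 5 := by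
    have : (8 : ℤ) ∣ p - 5 := ⟨2 * j + (3 * j + 1) * t, by linear_combination ht⟩
    omega
  have hodd : Odd p := Nat.odd_iff.mpr (by omega)
  have hND : ((4 * (3 * (3 * j + 1)) : ℕ) : ℤ) * (4 + 6 * t) = 3 ^ 2 * p + 3 := by
    push_cast
    linear_combination -9 * ht
  refine exists_isPrimitiveVec_of_prime (m := 3 * (3 * j + 1)) hp hp8 (by omega)
    (by exact_mod_cast hND) ?_
  have hprod := jacobiSym_neg_mul_jacobiSym hND
  have hmp : J(((3 * j + 1 : ℕ) : ℤ) | p) = 1 := by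
    rw [jacobiSym_eq_jacobiSym_three hp8 (by omega) fun d _ hd =>
      jacobiSym_eq_jacobiSym_neg_three_of_dvd_three_mul_add_one <|
        (Int.natCast_dvd_natCast.mpr hd).trans
          ⟨16 + 24 * t, by push_cast; linear_combination 3 * ht⟩]
    rw [jacobiSym.mod_left' (a₂ := 1) (by push_cast; omega), jacobiSym.one_left]
  have hp3 : J(p | 3) ≠ 0 := jacobiSym.ne_zero <| by
    rw [Int.gcd_natCast_natCast]
    exact (Nat.coprime_primes hp Nat.prime_three).2 (by omega)
  push_cast at hprod hmp
  rw [jacobiSym_four_mul hodd, jacobiSym.mul_left, hmp, mul_one, jacobiSym_neg_three hodd,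
    show (3 : ℤ) = ((3 : ℕ) : ℤ) from rfl,
    jacobiSym.quadratic_reciprocity_one_mod_four' (by decide) (by omega)] at hprod
  exact (mul_eq_right₀ hp3).mp hprod

end Jacobi

/-! ## The theorem -/

def HasOddRep (m : ℤ) : Prop := ∃ u v c : ℤ, u ^ 2 + v ^ 2 + 3 * c ^ 2 = 4 * m ∧ Odd c

def IsExceptional (m : ℕ) : Prop := ∃ r t : ℕ, m = 3 ^ (2 * r + 1) * (3 * t + 2)

theorem IsPrimitiveVec.hasOddRep {v : Fin 3 → ℤ} (hv : IsPrimitiveVec v) {m : ℤ}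
    (h : v 0 ^ 2 + v 1 ^ 2 + 3 * v 2 ^ 2 = 4 * m) : HasOddRep m := by
  refine ⟨v 0, v 1, v 2, h, ?_⟩
  have hpar (x : ℤ) : x ^ 2 % 4 = 0 ∧ 2 ∣ x ∨ x ^ 2 % 4 = 1 := by
    rcases Int.even_or_odd x with hx | hx
    · have := pow_dvd_pow_of_dvd (even_iff_two_dvd.mp hx) 2
      exact Or.inl ⟨by omega, even_iff_two_dvd.mp hx⟩
    · exact Or.inr (Int.sq_mod_four_eq_one_of_odd hx)
  by_contra hodd
  have h2 : 2 ∣ v 2 := even_iff_two_dvd.mp (Int.not_odd_iff_even.mp hodd)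
  have h4 := pow_dvd_pow_of_dvd h2 2
  have hdvd : ∀ i, 2 ∣ v i := by
    rcases hpar (v 0) with ⟨h0', h0⟩ | h0 <;> rcases hpar (v 1) with ⟨h1', h1⟩ | h1 <;>
      try omega
    intro i; fin_cases i <;> assumption
  exact absurd (hv 2 hdvd) (by decide)

theorem three_dvd_of_three_dvd_sq_add_sq {u v : ℤ} (h : 3 ∣ u ^ 2 + v ^ 2) :
    3 ∣ u ∧ 3 ∣ v := by
  have key : ∀ a b : ZMod 3, a ^ 2 + b ^ 2 = 0 → a = 0 ∧ b = 0 := by decide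
  have h3 : ((u ^ 2 + v ^ 2 : ℤ) : ZMod 3) = 0 :=
    (ZMod.intCast_zmod_eq_zero_iff_dvd _ 3).mpr (by exact_mod_cast h)
  push_cast at h3
  obtain ⟨hu, hv⟩ := key _ _ h3
  exact ⟨by exact_mod_cast (ZMod.intCast_zmod_eq_zero_iff_dvd u 3).mp hu,
    by exact_mod_cast (ZMod.intCast_zmod_eq_zero_iff_dvd v 3).mp hv⟩

theorem sq_emod_three_ne_two (c : ℤ) : c ^ 2 % 3 ≠ 2 := by
  rw [sq, Int.mul_emod]
  rcases (by omega : c % 3 = 0 ∨ c % 3 = 1 ∨ c % 3 = 2) with h | h | h <;> simp [h]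

theorem hasOddRep_nine_mul_iff (m : ℤ) : HasOddRep (9 * m) ↔ HasOddRep m := by
  constructor
  · rintro ⟨u, v, c, h, hc⟩
    obtain ⟨⟨u, rfl⟩, ⟨v, rfl⟩⟩ := three_dvd_of_three_dvd_sq_add_sq (u := u) (v := v)
      ⟨12 * m - c ^ 2, by linear_combination h⟩
    obtain ⟨c, rfl⟩ : 3 ∣ c :=
      Int.prime_three.dvd_of_dvd_pow (n := 2) ⟨4 * m - u ^ 2 - v ^ 2,
        mul_left_cancel₀ three_ne_zero (by linear_combination h)⟩
    exact ⟨u, v, c, mul_left_cancel₀ (by norm_num : (9 : ℤ) ≠ 0) (by linear_combination h),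
      (Int.odd_mul.mp hc).2⟩
  · rintro ⟨u, v, c, h, hc⟩
    exact ⟨3 * u, 3 * v, 3 * c, by linear_combination 9 * h, (by decide : Odd (3 : ℤ)).mul hc⟩

theorem not_hasOddRep_of_emod_nine_eq_six {m : ℤ} (hm : m % 9 = 6) : ¬ HasOddRep m := by
  rintro ⟨u, v, c, h, -⟩
  obtain ⟨k, rfl⟩ : ∃ k, m = 9 * k + 6 := ⟨m / 9, by omega⟩
  obtain ⟨⟨u, rfl⟩, ⟨v, rfl⟩⟩ := three_dvd_of_three_dvd_sq_add_sq (u := u) (v := v)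
    ⟨12 * k + 8 - c ^ 2, by linear_combination h⟩
  have : c ^ 2 = 12 * k + 8 - 3 * u ^ 2 - 3 * v ^ 2 :=
    mul_left_cancel₀ three_ne_zero (by linear_combination h)
  have := sq_emod_three_ne_two c
  omega

theorem isExceptional_nine_mul_iff (m : ℕ) : IsExceptional (9 * m) ↔ IsExceptional m := by
  constructor
  · rintro ⟨_ | r, t, h⟩
    · omega
    · exact ⟨r, t, Nat.eq_of_mul_eq_mul_left (by norm_num : 0 < 9) (by rw [h]; ring)⟩
  · rintro ⟨r, t, rfl⟩
    exact ⟨r + 1, t, by ring⟩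

theorem isExceptional_iff_of_not_nine_dvd {m : ℕ} (hm : ¬ 9 ∣ m) :
    IsExceptional m ↔ m % 9 = 6 := by
  constructor
  · rintro ⟨_ | r, t, rfl⟩
    · omega
    · exact absurd ⟨3 ^ (2 * r + 1) * (3 * t + 2), by ring⟩ hm
  · intro h
    exact ⟨0, m / 9, by omega⟩

theorem hasOddRep_iff_not_isExceptional (m : ℕ) (hm : 0 < m) :
    HasOddRep m ↔ ¬ IsExceptional m := by
  induction m using Nat.strong_induction_on with
  | _ m ih =>
  by_cases h9 : 9 ∣ m
  · obtain ⟨m, rfl⟩ := h9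
    push_cast
    rw [hasOddRep_nine_mul_iff, isExceptional_nine_mul_iff, ih m (by omega) (by omega)]
  rw [isExceptional_iff_of_not_nine_dvd h9]
  by_cases h3 : 3 ∣ m
  · obtain ⟨m, rfl⟩ := h3
    rcases (by omega : m % 3 = 1 ∨ m % 3 = 2) with h | h
    · obtain ⟨v, hv, hval⟩ := exists_isPrimitiveVec_of_mod_three_eq_one h
      simpa [show 3 * m % 9 ≠ 6 by omega] using hv.hasOddRep hval
    · simpa [show 3 * m % 9 = 6 by omega] using not_hasOddRep_of_emod_nine_eq_six (by omega)
  · obtain ⟨v, hv, hval⟩ := exists_isPrimitiveVec_of_not_three_dvd hm h3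
    simpa [show m % 9 ≠ 6 by omega] using hv.hasOddRep hval

theorem exists_triangular_iff_hasOddRep (n : ℤ) :
    (∃ x y z : ℤ, x * (x - 1) + y * (y - 1) + 6 * (z * (z - 1)) = 2 * n) ↔
      HasOddRep (n + 1) := by
  constructor
  · rintro ⟨x, y, z, h⟩
    exact ⟨x + y - 1, x - y, 2 * z - 1, by linear_combination 2 * h, ⟨z - 1, by ring⟩⟩
  · rintro ⟨u, v, c, h, k, rfl⟩
    rcases Int.even_or_odd' u with ⟨a, rfl | rfl⟩ <;>
      rcases Int.even_or_odd' v with ⟨b, rfl | rfl⟩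
    · have : 4 * (a ^ 2 + b ^ 2 + 3 * k ^ 2 + 3 * k - n) = 1 := by linear_combination h
      omega
    · exact ⟨a + b + 1, a - b, k + 1, mul_left_cancel₀ two_ne_zero (by linear_combination h)⟩
    · exact ⟨a + b + 1, a - b + 1, k + 1,
        mul_left_cancel₀ two_ne_zero (by linear_combination h)⟩
    · have : 4 * (a ^ 2 + a + b ^ 2 + b + 3 * k ^ 2 + 3 * k - n) = -1 := by
        linear_combination h
      omega

theorem exists_modEq_iff_isExceptional {n : ℤ} {M : ℕ} (hM : (M : ℤ) = n + 1) :
    (∃ r : ℕ, 0 < r ∧ n ≡ 2 * 3 ^ (2 * r - 1) - 1 [ZMOD 3 ^ (2 * r)]) ↔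
      IsExceptional M := by
  have hexp (s : ℕ) : 2 * (s + 1) - 1 = 2 * s + 1 := by omega
  have hpow (s : ℕ) : (3 : ℤ) ^ (2 * (s + 1)) = 3 ^ (2 * s + 1) * 3 := by ring
  constructor
  · rintro ⟨_ | s, hr, hmod⟩
    · omega
    obtain ⟨k, hk⟩ := hmod.dvd
    rw [hexp, hpow] at hk
    have hM' : (M : ℤ) = 3 ^ (2 * s + 1) * (2 - 3 * k) := by linear_combination hM - hk
    have hk0 : k ≤ 0 := by
      have : 0 ≤ (3 : ℤ) ^ (2 * s + 1) * (2 - 3 * k) := hM' ▸ M.cast_nonneg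
      have := nonneg_of_mul_nonneg_right this (by positivity)
      omega
    refine ⟨s, (-k).toNat, ?_⟩
    have : ((-k).toNat : ℤ) = -k := Int.toNat_of_nonneg (by omega)
    exact_mod_cast (show (M : ℤ) = 3 ^ (2 * s + 1) * (3 * ((-k).toNat : ℤ) + 2) by
      rw [this, hM']; ring)
  · rintro ⟨s, t, rfl⟩
    refine ⟨s + 1, by omega, ?_⟩
    rw [hexp, Int.modEq_iff_dvd, hpow]
    push_cast at hM
    exact ⟨-t, by linear_combination hM⟩

theorem stmt_19 (n : ℤ) (hn : 0 < n) :
    (∃ x y z : ℤ, x * (x - 1) + y * (y - 1) + 6 * (z * (z - 1)) = 2 * n) ↔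
      ¬ ∃ r : ℕ, 0 < r ∧ n ≡ 2 * 3 ^ (2 * r - 1) - 1 [ZMOD 3 ^ (2 * r)] := by
  obtain ⟨M, hM⟩ := Int.eq_ofNat_of_zero_le (by omega : 0 ≤ n + 1)
  rw [exists_triangular_iff_hasOddRep, exists_modEq_iff_isExceptional hM.symm, hM]
  exact hasOddRep_iff_not_isExceptional M (by omega)
end
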